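/- arXiv:2306.07390 — 8 statements merged into one kernel-verified Lean document; each statement's English description precedes it below -/
import Mathlib

section
/- Let X_1, …, X_m be linear subspaces of ℝ^n and let k ≥ 0. Identifying, for each subspace X ⊆ ℝ^n, the exterior power ⋀^k X with its image in ⋀^k ℝ^n under the (injective) linear map induced by the inclusion X ↪ ℝ^n, one has ⋀^k (X_1 ∩ ⋯ ∩ X_m) = (⋀^k X_1) ∩ ⋯ ∩ (⋀^k X_m) as subspaces of ⋀^k ℝ^n. -/
open ExteriorAlgebra

section Aux

variable {K : Type*} {V : Type*} [Field K] [AddCommGroup V] [Module K V]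

/-- There is a linear endomorphism of `V` which is the identity on `Y` and maps `X`
into `X ⊓ Y`. -/
lemma exists_proj_aux (X Y : Submodule K V) :
    ∃ f : V →ₗ[K] V, (∀ y ∈ Y, f y = y) ∧ ∀ x ∈ X, f x ∈ X ⊓ Y := by
  classical
  set W : Submodule K V := X ⊓ Y with hW
  -- complement of W inside X
  obtain ⟨C', hC'⟩ := Submodule.exists_isCompl (Submodule.comap X.subtype W)
  set C : Submodule K V := Submodule.map X.subtype C' with hC
  have hCX : C ≤ X := by
    rw [hC]
    rintro _ ⟨c, _, rfl⟩
    exact c.2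
  have hWC : W ⊔ C = X := by
    have := congrArg (Submodule.map X.subtype) hC'.sup_eq_top
    rw [Submodule.map_sup, Submodule.map_comap_subtype, Submodule.map_top,
      Submodule.range_subtype] at this
    rw [inf_of_le_right (show W ≤ X from inf_le_left)] at this
    exact this
  have hCYdis : ∀ v ∈ C, v ∈ Y → v = 0 := by
    intro v hv hvY
    rw [hC] at hv
    obtain ⟨c, hc, rfl⟩ := hv
    have hmem : c ∈ Submodule.comap X.subtype W := by
      simp only [Submodule.mem_comap, hW, Submodule.mem_inf]
      exact ⟨c.2, hvY⟩
    have : c ∈ (⊥ : Submodule K X) := by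
      rw [← hC'.inf_eq_bot]
      exact ⟨hmem, hc⟩
    simp only [Submodule.mem_bot] at this
    simp [this]
  -- complement of Y ⊔ C
  obtain ⟨D, hD⟩ := Submodule.exists_isCompl (Y ⊔ C)
  have hcompl : IsCompl Y (C ⊔ D) := by
    constructor
    · rw [disjoint_iff_inf_le]
      rintro v ⟨hvY, hvCD⟩
      obtain ⟨c, hc, d, hd, rfl⟩ := Submodule.mem_sup.mp hvCD
      have hdmem : d ∈ (Y ⊔ C) ⊓ D := by
        refine ⟨?_, hd⟩
        have : d = (c + d) - c := by abel
        rw [this]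
        exact sub_mem (Submodule.mem_sup_left hvY) (Submodule.mem_sup_right hc)
      rw [hD.inf_eq_bot] at hdmem
      simp only [Submodule.mem_bot] at hdmem
      subst hdmem
      rw [add_zero] at hvY ⊢
      simp [hCYdis c hc hvY]
    · rw [codisjoint_iff]
      rw [← sup_assoc]
      exact hD.sup_eq_top
  refine ⟨Y.subtype ∘ₗ Submodule.projectionOnto Y (C ⊔ D) hcompl, ?_, ?_⟩
  · intro y hy
    simp [Submodule.projectionOnto_apply_left hcompl ⟨y, hy⟩]
  · intro x hx
    rw [← hWC] at hx
    obtain ⟨w, hw, c, hc, rfl⟩ := Submodule.mem_sup.mp hx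
    have h1 : Submodule.projectionOnto Y (C ⊔ D) hcompl w = ⟨w, hw.2⟩ :=
      Submodule.projectionOnto_apply_left hcompl ⟨w, hw.2⟩
    have h2 : Submodule.projectionOnto Y (C ⊔ D) hcompl c = 0 :=
      Submodule.projectionOnto_apply_of_mem_right hcompl (Submodule.mem_sup_left hc)
    simp only [LinearMap.comp_apply, map_add, h1, h2, add_zero, Submodule.coe_subtype,
      ZeroMemClass.coe_zero]
    exact hw

/-- The key binary case, phrased internally to the exterior algebra of `V`:
the intersection of the `k`-th powers of `ι '' X` and `ι '' Y` is contained in the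
`k`-th power of `ι '' (X ⊓ Y)`. -/
lemma inf_pow_map_iota (k : ℕ) (X Y : Submodule K V) :
    (Submodule.map (ι K) X) ^ k ⊓ (Submodule.map (ι K) Y) ^ k
      ≤ (Submodule.map (ι K) (X ⊓ Y)) ^ k := by
  obtain ⟨f, hfY, hfX⟩ := exists_proj_aux X Y
  set F : ExteriorAlgebra K V →ₐ[K] ExteriorAlgebra K V := ExteriorAlgebra.map f with hF
  rintro x ⟨hxX, hxY⟩
  -- `F` is the identity on `(ι '' Y) ^ k`
  have hfix : F x = x := by
    refine Submodule.pow_induction_on_left (M := Submodule.map (ι K) Y)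
      (C := fun z => F z = z) (fun r => F.commutes r)
      (fun a b ha hb => by show F (a + b) = a + b; rw [map_add]; rw [ha, hb]) ?_ hxY
    rintro m ⟨y, hy, rfl⟩ z hz
    rw [map_mul, hz, hF, ExteriorAlgebra.map_apply_ι, hfY y hy]
  -- `F` maps `(ι '' X) ^ k` into `(ι '' (X ⊓ Y)) ^ k`
  have hmap : F x ∈ (Submodule.map (ι K) (X ⊓ Y)) ^ k := by
    have h1 : F x ∈ Submodule.map F.toLinearMap ((Submodule.map (ι K) X) ^ k) :=
      Submodule.mem_map_of_mem hxX
    rw [Submodule.map_pow] at h1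
    have hle : Submodule.map F.toLinearMap (Submodule.map (ι K) X)
        ≤ Submodule.map (ι K) (X ⊓ Y) := by
      rintro _ ⟨_, ⟨v, hv, rfl⟩, rfl⟩
      have : F.toLinearMap (ι K v) = ι K (f v) := ExteriorAlgebra.map_apply_ι f v
      rw [this]
      exact Submodule.mem_map_of_mem (hfX v hv)
    exact pow_le_pow_left' hle k h1
  rw [← hfix]
  exact hmap

/-- Image of the `k`-th exterior power of a subspace equals the `k`-th power of `ι '' X`. -/
lemma map_exteriorPower_eq (k : ℕ) (X : Submodule K V) :
    Submodule.map (ExteriorAlgebra.map X.subtype).toLinearMap (⋀[K]^k ↥X)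
      = (Submodule.map (ι K) X) ^ k := by
  rw [show (⋀[K]^k ↥X) = (LinearMap.range (ι K : X →ₗ[K] ExteriorAlgebra K X)) ^ k from rfl,
    Submodule.map_pow]
  congr 1
  rw [← LinearMap.range_comp, ExteriorAlgebra.map_comp_ι, LinearMap.range_comp,
    Submodule.range_subtype]

/-- Auxiliary splitting of an infimum over `Fin (m + 1)`. -/
lemma fin_iInf_split {α : Type*} [CompleteLattice α] {m : ℕ} (f : Fin (m + 1) → α) :
    ⨅ i, f i = f 0 ⊓ ⨅ i : Fin m, f i.succ := by
  apply le_antisymm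
  · exact le_inf (iInf_le _ 0) (le_iInf fun i => iInf_le _ i.succ)
  · refine le_iInf fun i => ?_
    exact Fin.cases inf_le_left (fun j => le_trans inf_le_right (iInf_le _ j)) i

/-- The hard inclusion, internal version, for finitely many subspaces. -/
lemma iInf_pow_le_pow_iInf (k : ℕ) : ∀ (m : ℕ) (X : Fin (m + 1) → Submodule K V),
    ⨅ i, (Submodule.map (ι K) (X i)) ^ k ≤ (Submodule.map (ι K) (⨅ i, X i)) ^ k := by
  intro m
  induction m with
  | zero =>
    intro X
    rw [fin_iInf_split X, fin_iInf_split fun i => (Submodule.map (ι K) (X i)) ^ k]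
    simp
  | succ m ih =>
    intro X
    have h1 : (⨅ i, X i) = X 0 ⊓ ⨅ i : Fin (m + 1), X i.succ := fin_iInf_split X
    calc ⨅ i, (Submodule.map (ι K) (X i)) ^ k
        = (Submodule.map (ι K) (X 0)) ^ k
            ⊓ ⨅ i : Fin (m + 1), (Submodule.map (ι K) (X i.succ)) ^ k :=
          fin_iInf_split _
      _ ≤ (Submodule.map (ι K) (X 0)) ^ k
            ⊓ (Submodule.map (ι K) (⨅ i : Fin (m + 1), X i.succ)) ^ k :=
          inf_le_inf_left _ (ih fun i => X i.succ)
      _ ≤ (Submodule.map (ι K) (X 0 ⊓ ⨅ i : Fin (m + 1), X i.succ)) ^ k :=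
          inf_pow_map_iota k _ _
      _ = (Submodule.map (ι K) (⨅ i, X i)) ^ k := by rw [h1]

end Aux

/-- for linear subspaces `X 1, …, X m` of `ℝ^n` and `k ≥ 0`, identifying the
`k`-th exterior power `⋀^k X` of a subspace `X` with its image in `⋀^k ℝ^n` under the
(injective) map induced by the inclusion `X ↪ ℝ^n`, one has
`⋀^k (X 1 ∩ ⋯ ∩ X m) = ⋀^k X 1 ∩ ⋯ ∩ ⋀^k X m` as subspaces of `⋀^k ℝ^n`. -/
theorem exteriorPower_iInf {n m k : ℕ} (hm : 0 < m)
    (X : Fin m → Submodule ℝ (Fin n → ℝ)) :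
    Submodule.map (ExteriorAlgebra.map (⨅ i, X i).subtype).toLinearMap
        (⋀[ℝ]^k ↥(⨅ i, X i)) =
      ⨅ i, Submodule.map (ExteriorAlgebra.map (X i).subtype).toLinearMap (⋀[ℝ]^k ↥(X i)) := by
  simp only [map_exteriorPower_eq]
  apply le_antisymm
  · exact le_iInf fun i => pow_le_pow_left' (Submodule.map_mono (iInf_le X i)) k
  · obtain ⟨m, rfl⟩ : ∃ m', m = m' + 1 := ⟨m - 1, (Nat.succ_pred_eq_of_pos hm).symm⟩
    exact iInf_pow_le_pow_iInf k m X
end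

section
/- Let E_1, …, E_N (N ≥ 2) be a minimally intersecting arrangement of linear subspaces of ℝ^n. Then there exist finite subsets B_i ⊆ E_i, each of which is a basis of E_i (linearly independent and spanning E_i), such that the union B_1 ∪ ⋯ ∪ B_N is a basis of ℝ^n. -/
open Module Submodule

/-- An arrangement of subspaces is *minimally intersecting* in the ambient space `V` if for
every nonempty subset `I` of indices, the codimension of `⋂ i ∈ I, E i` equals the sum of the
codimensions of the `E i`. -/
def IsMinimallyIntersecting {V : Type*} [AddCommGroup V] [Module ℝ V]
    {ι : Type*} (E : ι → Submodule ℝ V) : Prop :=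
  ∀ I : Finset ι, I.Nonempty →
    finrank ℝ V - finrank ℝ ↥(⨅ i ∈ I, E i) = ∑ i ∈ I, (finrank ℝ V - finrank ℝ ↥(E i))

/-- a minimally intersecting arrangement `E 1, …, E N` (`N ≥ 2`) of subspaces
of `ℝ^n` admits finite subsets `B i ⊆ E i` which are bases of the respective `E i` (linearly
independent and spanning) and whose union is a basis of `ℝ^n`. -/
theorem minimallyIntersecting_exists_adapted_bases {n N : ℕ} (hN : 2 ≤ N)
    (E : Fin N → Submodule ℝ (Fin n → ℝ)) (hE : IsMinimallyIntersecting E) :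
    ∃ B : Fin N → Set (Fin n → ℝ),
      (∀ i, (B i).Finite) ∧
      (∀ i, B i ⊆ (E i : Set (Fin n → ℝ))) ∧
      (∀ i, LinearIndependent ℝ ((↑) : B i → (Fin n → ℝ)) ∧
        Submodule.span ℝ (B i) = E i) ∧
      LinearIndependent ℝ ((↑) : ↥(⋃ i, B i) → (Fin n → ℝ)) ∧
      Submodule.span ℝ (⋃ i, B i) = ⊤ := by
  classical
  have hNpos : 0 < N := by omega
  have hdim : finrank ℝ (Fin n → ℝ) = n := Module.finrank_fin_fun ℝ
  set c : Fin N → ℕ := fun i => n - finrank ℝ (E i) with hc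
  set F : Submodule ℝ (Fin n → ℝ) := ⨅ i ∈ (Finset.univ : Finset (Fin N)), E i with hFdef
  set D : Fin N → Submodule ℝ (Fin n → ℝ) := fun i => ⨅ j ∈ Finset.univ.erase i, E j
    with hDdef
  have huniv : (Finset.univ : Finset (Fin N)).Nonempty := ⟨⟨0, hNpos⟩, Finset.mem_univ _⟩
  have herase : ∀ i : Fin N, (Finset.univ.erase i).Nonempty := by
    intro i
    rw [← Finset.card_pos, Finset.card_erase_of_mem (Finset.mem_univ i), Finset.card_univ,
      Fintype.card_fin]
    omega
  -- basic rank facts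
  have hEc : ∀ i, finrank ℝ (E i) + c i = n := by
    intro i
    have h1 : finrank ℝ (E i) ≤ n := le_trans (E i).finrank_le (le_of_eq hdim)
    simp only [hc]; omega
  have hFsum : finrank ℝ F + ∑ i, c i = n := by
    have h := hE Finset.univ huniv
    rw [hdim, ← hFdef] at h
    have h1 : finrank ℝ F ≤ n := le_trans F.finrank_le (le_of_eq hdim)
    simp only [hc] at h ⊢
    omega
  have hsumle : ∑ i, c i ≤ n := by omega
  have hDsum : ∀ i, finrank ℝ (D i) + ∑ j ∈ Finset.univ.erase i, c j = n := by
    intro i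
    have h := hE (Finset.univ.erase i) (herase i)
    rw [hdim] at h
    have h2 : D i = ⨅ j ∈ Finset.univ.erase i, E j := rfl
    rw [← h2] at h
    have h1 : finrank ℝ (D i) ≤ n := le_trans (D i).finrank_le (le_of_eq hdim)
    simp only [hc] at h ⊢
    omega
  have hsplit : ∀ i, c i + ∑ j ∈ Finset.univ.erase i, c j = ∑ j, c j := fun i =>
    Finset.add_sum_erase _ c (Finset.mem_univ i)
  -- lattice facts
  have hFE : ∀ i, F ≤ E i := fun i => iInf₂_le i (Finset.mem_univ i)
  have hDE : ∀ i j, j ≠ i → D i ≤ E j := fun i j hj =>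
    iInf₂_le j (Finset.mem_erase.2 ⟨hj, Finset.mem_univ j⟩)
  have hFD : ∀ i, F ≤ D i := fun i =>
    le_iInf₂ fun j _ => iInf₂_le j (Finset.mem_univ j)
  have hDEF : ∀ i, D i ⊓ E i = F := by
    intro i
    have : F = ⨅ j ∈ insert i (Finset.univ.erase i), E j := by
      rw [Finset.insert_erase (Finset.mem_univ i)]
    rw [this, Finset.iInf_insert, inf_comm]
  -- choose complements G i of F inside D i
  have hGex : ∀ i, ∃ G : Submodule ℝ (Fin n → ℝ), G ≤ D i ∧ F ⊓ G = ⊥ ∧ F ⊔ G = D i := by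
    intro i
    obtain ⟨q, hq⟩ := Submodule.exists_isCompl (Submodule.comap (D i).subtype F)
    have hFmap : F = (Submodule.comap (D i).subtype F).map (D i).subtype := by
      rw [Submodule.map_comap_subtype, inf_eq_right.mpr (hFD i)]
    refine ⟨q.map (D i).subtype, Submodule.map_subtype_le _ _, ?_, ?_⟩
    · rw [hFmap, ← Submodule.map_inf _ (Submodule.injective_subtype _), hq.inf_eq_bot,
        Submodule.map_bot]
    · rw [hFmap, ← Submodule.map_sup, hq.sup_eq_top, Submodule.map_subtype_top]
  choose G hGD hFG hFGD using hGex
  have hGrank : ∀ i, finrank ℝ (G i) = c i := by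
    intro i
    have h := Submodule.finrank_sup_add_finrank_inf_eq F (G i)
    rw [hFG, hFGD, finrank_bot] at h
    have h2 := hDsum i
    have h3 := hsplit i
    omega
  have hGE : ∀ i, G i ⊓ E i = ⊥ := by
    intro i
    rw [← le_bot_iff, ← (hFG i)]
    refine le_inf ?_ inf_le_left
    calc G i ⊓ E i ≤ D i ⊓ E i := inf_le_inf_right _ (hGD i)
      _ = F := hDEF i
  -- the family of submodules
  set H : Option (Fin N) → Submodule ℝ (Fin n → ℝ) := fun x => x.elim F G with hHdef
  have hHE : ∀ (i : Fin N) (x : Option (Fin N)), x ≠ some i → H x ≤ E i := by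
    rintro i (_ | j) hx
    · exact hFE i
    · exact le_trans (hGD j) (hDE j i fun h => hx (by rw [h]))
  -- independence of the family
  have hMaster : ∀ x, Disjoint (H x) (⨆ y, ⨆ _ : y ≠ x, H y) := by
    rintro (_ | i)
    · -- the F component
      have hle : (⨆ y, ⨆ _ : y ≠ (none : Option (Fin N)), H y) ≤ ⨆ j, G j := by
        refine iSup₂_le ?_
        rintro (_ | j) hy
        · exact absurd rfl hy
        · exact le_iSup G j
      refine Disjoint.mono_right hle (disjoint_def.2 fun x hxF hxG => ?_)
      rw [Submodule.mem_iSup_iff_exists_finsupp] at hxG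
      obtain ⟨f, hf, hfsum⟩ := hxG
      have hsum : ∑ j, f j = x := by
        rw [← hfsum, Finsupp.sum_fintype]
        intro _; rfl
      have hzero : ∀ i, f i = 0 := by
        intro i
        have h1 : f i = x - ∑ j ∈ Finset.univ.erase i, f j := by
          rw [← hsum, ← Finset.add_sum_erase _ f (Finset.mem_univ i)]
          abel
        have h2 : f i ∈ E i := by
          rw [h1]
          refine sub_mem (hFE i hxF) (Submodule.sum_mem _ fun j hj => ?_)
          exact le_trans (hGD j) (hDE j i (Finset.mem_erase.1 hj).1.symm) (hf j)
        have h3 : f i ∈ G i ⊓ E i := ⟨hf i, h2⟩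
        rw [hGE i] at h3
        exact h3
      rw [← hsum]
      exact Finset.sum_eq_zero fun j _ => hzero j
    · -- the G i components
      have hle : (⨆ y, ⨆ _ : y ≠ (some i : Option (Fin N)), H y) ≤ E i :=
        iSup₂_le fun y hy => hHE i y hy
      exact Disjoint.mono_right hle (disjoint_def.2 fun x hxG hxE => by
        have : x ∈ G i ⊓ E i := ⟨hxG, hxE⟩
        rw [hGE i] at this; exact this)
  -- bases of the pieces
  set v : ∀ x : Option (Fin N), Fin (finrank ℝ (H x)) → (Fin n → ℝ) :=
    fun x k => ((Module.finBasis ℝ (H x)) k : Fin n → ℝ) with hvdef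
  have hvindep : ∀ x, LinearIndependent ℝ (v x) :=
    fun x => ((Module.finBasis ℝ (H x)).linearIndependent).map' (H x).subtype
      (Submodule.ker_subtype _)
  have hvspan : ∀ x, Submodule.span ℝ (Set.range (v x)) = H x := by
    intro x
    have : Set.range (v x) = (H x).subtype '' Set.range (Module.finBasis ℝ (H x)) := by
      rw [← Set.range_comp]; rfl
    rw [this, ← Submodule.map_span, Basis.span_eq, Submodule.map_subtype_top]
  -- the big linearly independent family
  have hbig : LinearIndependent ℝ fun ji : Σ x, Fin (finrank ℝ (H x)) => v ji.1 ji.2 := by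
    refine linearIndependent_iUnion_finite hvindep ?_
    intro x t _ hxt
    refine Disjoint.mono (le_of_eq (hvspan x)) ?_ (hMaster x)
    refine iSup₂_le fun y hy => ?_
    rw [hvspan y]
    exact le_iSup₂ (f := fun y _ => H y) y (fun h : y = x => hxt (h ▸ hy))
  set s : Option (Fin N) → Set (Fin n → ℝ) := fun x => Set.range (v x) with hsdef
  have hsfin : ∀ x, (s x).Finite := fun x => Set.finite_range _
  have hranges : Set.range (fun ji : Σ x, Fin (finrank ℝ (H x)) => v ji.1 ji.2) = ⋃ x, s x :=
    Set.range_sigma_eq_iUnion_range _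
  have hunion_li : LinearIndependent ℝ ((↑) : ↥(⋃ x, s x) → (Fin n → ℝ)) := by
    rw [← hranges]
    exact hbig.linearIndepOn_id
  -- total span
  have hcard : finrank ℝ (Submodule.span ℝ (⋃ x, s x)) = n := by
    rw [← hranges, finrank_span_eq_card hbig]
    rw [Fintype.card_sigma]
    simp only [Fintype.card_fin]
    rw [Fintype.sum_option]
    have h0 : finrank ℝ (H none) = finrank ℝ F := rfl
    have hsome : ∀ j, finrank ℝ (H (some j)) = c j := fun j => hGrank j
    rw [h0, Finset.sum_congr rfl fun j _ => hsome j]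
    exact hFsum
  have hTop : Submodule.span ℝ (⋃ x, s x) = ⊤ :=
    Submodule.eq_top_of_finrank_eq (by rw [hcard, hdim])
  have hsupH : (⨆ x, H x) = ⊤ := by
    rw [← hTop]
    rw [Submodule.span_iUnion]
    exact iSup_congr fun x => (hvspan x).symm |>.symm ▸ rfl
  -- define the sets B
  set B : Fin N → Set (Fin n → ℝ) := fun i => ⋃ x, ⋃ _ : x ≠ some i, s x with hBdef
  have hBsub : ∀ i, B i ⊆ ⋃ x, s x := fun i =>
    Set.iUnion_subset fun x => Set.iUnion_subset fun _ => Set.subset_iUnion s x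
  have hBunion : (⋃ i, B i) = ⋃ x, s x := by
    refine le_antisymm (Set.iUnion_subset fun i => hBsub i) ?_
    refine Set.iUnion_subset fun x => ?_
    have : ∃ i : Fin N, x ≠ some i := by
      rcases x with _ | j
      · exact ⟨⟨0, hNpos⟩, by simp⟩
      · rcases eq_or_ne j ⟨0, hNpos⟩ with h | h
        · refine ⟨⟨1, by omega⟩, ?_⟩
          simp only [ne_eq, Option.some.injEq, h]
          intro hcon
          have := congrArg Fin.val hcon
          simp at this
        · exact ⟨⟨0, hNpos⟩, by simpa using h⟩
    obtain ⟨i, hi⟩ := this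
    exact le_trans (by exact Set.subset_iUnion₂ (s := fun x _ => s x) x hi)
      (Set.subset_iUnion B i)
  -- span of B i
  have hBspan : ∀ i, Submodule.span ℝ (B i) = ⨆ x, ⨆ _ : x ≠ some i, H x := by
    intro i
    rw [hBdef]
    simp only [Submodule.span_iUnion]
    exact iSup_congr fun x => iSup_congr fun _ => hvspan x
  have hWE : ∀ i, Submodule.span ℝ (B i) = E i := by
    intro i
    set W : Submodule ℝ (Fin n → ℝ) := ⨆ x, ⨆ _ : x ≠ some i, H x with hWdef
    rw [hBspan i, ← hWdef]
    have hWle : W ≤ E i := iSup₂_le fun x hx => hHE i x hx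
    have hWG : W ⊔ G i = ⊤ := by
      refine le_antisymm le_top ?_
      rw [← hsupH]
      refine iSup_le fun x => ?_
      rcases eq_or_ne x (some i) with h | h
      · subst h; exact le_sup_right
      · exact le_trans (le_iSup₂ (f := fun y (_ : y ≠ some i) => H y) x h) le_sup_left
    have hWGbot : W ⊓ G i = ⊥ := by
      rw [← le_bot_iff, ← hGE i]
      exact le_inf inf_le_right (le_trans (inf_le_inf_right _ hWle) inf_le_left)
    have h := Submodule.finrank_sup_add_finrank_inf_eq W (G i)
    rw [hWG, hWGbot, finrank_bot, finrank_top, hdim, hGrank i] at h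
    have hEi := hEc i
    exact (Submodule.eq_of_le_of_finrank_le hWle (by omega)).symm ▸ rfl
  refine ⟨B, ?_, ?_, ?_, ?_, ?_⟩
  · intro i
    exact Set.Finite.subset (Set.finite_iUnion hsfin) (hBsub i)
  · intro i
    rw [← hWE i]
    exact Submodule.subset_span
  · intro i
    exact ⟨LinearIndepOn.mono (v := id) hunion_li (hBsub i), hWE i⟩
  · rw [hBunion]; exact hunion_li
  · rw [hBunion]; exact hTop
end

section
/- Let S = {E_1, …, E_N} be an arrangement of linear subspaces of a finite-dimensional real vector space V which is minimally intersecting within its span E_1 + ⋯ + E_N. Then S has the k-extension property for every k ≥ 0: whenever alternating k-forms ω_i ∈ ⋀^k E_i^* are given with ω_i and ω_j having equal restrictions to ⋀^k(E_i ∩ E_j) for all i, j, there exists ω ∈ ⋀^k V^* whose restriction to ⋀^k E_i equals ω_i for every i. -/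
open Module Submodule

/-- An arrangement of subspaces of `V`, all contained in a subspace `W`, is *minimally
intersecting within `W`* if for every nonempty subset `I` of indices, the codimension of
`⋂ i ∈ I, E i` relative to `W` equals the sum of the codimensions of the `E i` relative
to `W`. -/
def IsMinimallyIntersectingWithin {V : Type*} [AddCommGroup V] [Module ℝ V]
    {ι : Type*} (W : Submodule ℝ V) (E : ι → Submodule ℝ V) : Prop :=
  (∀ i, E i ≤ W) ∧
    ∀ I : Finset ι, I.Nonempty →
      finrank ℝ ↥W - finrank ℝ ↥(⨅ i ∈ I, E i) =
        ∑ i ∈ I, (finrank ℝ ↥W - finrank ℝ ↥(E i))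

/-- A family of subspaces of `V` has the *`k`-extension property* if every compatible family of
alternating `k`-forms on the subspaces (i.e. the forms agree after restriction to the pairwise
intersections) extends to an alternating `k`-form on all of `V`. -/
def HasExtensionProperty (k : ℕ) {V : Type*} [AddCommGroup V] [Module ℝ V]
    {ι : Type*} (E : ι → Submodule ℝ V) : Prop :=
  ∀ ω : (i : ι) → AlternatingMap ℝ ↥(E i) ℝ (Fin k),
    (∀ i j, (ω i).compLinearMap (Submodule.inclusion (inf_le_left : E i ⊓ E j ≤ E i)) =
      (ω j).compLinearMap (Submodule.inclusion (inf_le_right : E i ⊓ E j ≤ E j))) →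
    ∃ Ω : AlternatingMap ℝ V ℝ (Fin k),
      ∀ i, Ω.compLinearMap (E i).subtype = ω i

section Auxiliary

variable {V : Type*} [AddCommGroup V] [Module ℝ V] [FiniteDimensional ℝ V]

omit [FiniteDimensional ℝ V] in
/-- Inside a vector space, any subspace `D` of a subspace `K` has a complement in `K`. -/
lemma exists_compl_le' {D K : Submodule ℝ V} (hDK : D ≤ K) :
    ∃ F : Submodule ℝ V, F ≤ K ∧ D ⊓ F = ⊥ ∧ D ⊔ F = K := by
  obtain ⟨q, hq⟩ := Submodule.exists_isCompl (D.comap K.subtype)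
  have hmap : (D.comap K.subtype).map K.subtype = D := by
    rw [Submodule.map_comap_subtype]; exact inf_eq_right.mpr hDK
  refine ⟨q.map K.subtype, Submodule.map_subtype_le _ _, ?_, ?_⟩
  · rw [← hmap, ← Submodule.map_inf _ (Submodule.injective_subtype K), hq.inf_eq_bot,
      Submodule.map_bot]
  · rw [← hmap, ← Submodule.map_sup, hq.sup_eq_top, Submodule.map_top, Submodule.range_subtype]

/-- For a minimally intersecting arrangement `E 0, …, E N` in `W`, the last subspace has a
complement `F` in `W` which is contained in all the other subspaces. -/
lemma exists_good_compl (N : ℕ) (E : Fin (N + 1) → Submodule ℝ V) (W : Submodule ℝ V)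
    (hW : ∀ i, E i ≤ W)
    (hadd : ∀ I : Finset (Fin (N + 1)), I.Nonempty →
      (finrank ℝ ↥(⨅ i ∈ I, E i) : ℤ) +
        ∑ i ∈ I, ((finrank ℝ ↥W : ℤ) - finrank ℝ ↥(E i)) = finrank ℝ ↥W) :
    ∃ F : Submodule ℝ V, E (Fin.last N) ⊓ F = ⊥ ∧ E (Fin.last N) ⊔ F = W ∧
      ∀ j : Fin N, F ≤ E j.castSucc := by
  obtain _ | M := N
  · obtain ⟨F, hFW, hinf, hsup⟩ := exists_compl_le' (hW (Fin.last 0))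
    exact ⟨F, hinf, hsup, fun j => j.elim0⟩
  · set lst := Fin.last (M + 1) with hlst
    set K : Submodule ℝ V := ⨅ i ∈ Finset.univ.erase lst, E i with hK
    have h0ne : (0 : Fin (M + 2)) ≠ lst := by
      simp [hlst, Fin.ext_iff]
    have h0mem : (0 : Fin (M + 2)) ∈ Finset.univ.erase lst :=
      Finset.mem_erase.mpr ⟨h0ne, Finset.mem_univ _⟩
    have hKle : ∀ i ∈ Finset.univ.erase lst, K ≤ E i := fun i hi => iInf₂_le i hi
    have hKW : K ≤ W := (hKle _ h0mem).trans (hW _)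
    have hEK : E lst ⊓ K = ⨅ i ∈ (Finset.univ : Finset (Fin (M + 2))), E i := by
      conv_rhs => rw [← Finset.insert_erase (Finset.mem_univ lst)]
      rw [Finset.iInf_insert]
    have h1 := hadd Finset.univ Finset.univ_nonempty
    have h2 := hadd _ ⟨0, h0mem⟩
    rw [← hK] at h2
    have hsum := Finset.add_sum_erase Finset.univ
      (fun i => ((finrank ℝ ↥W : ℤ) - finrank ℝ ↥(E i))) (Finset.mem_univ lst)
    have hsupinf := Submodule.finrank_sup_add_finrank_inf_eq (E lst) K
    rw [hEK] at hsupinf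
    have hsupW : E lst ⊔ K = W := by
      apply Submodule.eq_of_le_of_finrank_le (sup_le (hW lst) hKW)
      have hcast : ((finrank ℝ ↥(E lst ⊔ K) : ℤ) +
            finrank ℝ ↥(⨅ i ∈ (Finset.univ : Finset (Fin (M + 2))), E i))
          = (finrank ℝ ↥(E lst) : ℤ) + finrank ℝ ↥K := by exact_mod_cast hsupinf
      have : (finrank ℝ ↥W : ℤ) ≤ (finrank ℝ ↥(E lst ⊔ K) : ℤ) := by linarith
      exact_mod_cast this
    obtain ⟨F, hFK, hinf, hsup⟩ := exists_compl_le' (inf_le_right : E lst ⊓ K ≤ K)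
    refine ⟨F, ?_, ?_, fun j => (hFK).trans (hKle _ (Finset.mem_erase.mpr
      ⟨(Fin.castSucc_lt_last j).ne, Finset.mem_univ _⟩))⟩
    · apply le_bot_iff.mp
      intro x hx
      have : x ∈ (E lst ⊓ K) ⊓ F := ⟨⟨hx.1, hFK hx.2⟩, hx.2⟩
      rw [hinf] at this; exact this
    · rw [← hsupW, ← hsup, ← sup_assoc, sup_inf_self]

/-- The key induction: a family of subspaces of `V` contained in `W`, whose codimensions
relative to `W` are additive on all nonempty intersections, has the extension property. -/
lemma ext_aux (N : ℕ) : ∀ (E : Fin N → Submodule ℝ V) (W : Submodule ℝ V),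
    (∀ i, E i ≤ W) →
    (∀ I : Finset (Fin N), I.Nonempty →
      (finrank ℝ ↥(⨅ i ∈ I, E i) : ℤ) +
        ∑ i ∈ I, ((finrank ℝ ↥W : ℤ) - finrank ℝ ↥(E i)) = finrank ℝ ↥W) →
    ∀ k, HasExtensionProperty k E := by
  induction N with
  | zero => exact fun E W _ _ k ω _ => ⟨0, fun i => i.elim0⟩
  | succ N IH =>
    intro E W hW hadd k ω hcompat
    -- extension for the subfamily consisting of the first `N` subspaces
    have hadd' : ∀ I : Finset (Fin N), I.Nonempty →
        (finrank ℝ ↥(⨅ j ∈ I, E j.castSucc) : ℤ) +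
          ∑ j ∈ I, ((finrank ℝ ↥W : ℤ) - finrank ℝ ↥(E j.castSucc)) = finrank ℝ ↥W := by
      intro I hI
      have h := hadd (I.image Fin.castSucc) (hI.image _)
      rw [Finset.iInf_finset_image,
        Finset.sum_image (fun a _ b _ h => Fin.castSucc_injective _ h)] at h
      exact h
    obtain ⟨Ω', hΩ'⟩ := IH (fun j => E j.castSucc) W (fun j => hW _) hadd' k
      (fun j => ω j.castSucc) (fun i j => hcompat i.castSucc j.castSucc)
    set lst := Fin.last N with hlst
    obtain ⟨F, hinf, hsup, hFle⟩ := exists_good_compl N E W hW hadd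
    obtain ⟨C, hC⟩ := Submodule.exists_isCompl W
    have hFW : F ≤ W := hsup ▸ le_sup_right
    -- elements of `F ⊔ C` lying in `W` lie in `F`
    have hFCW : ∀ x ∈ F ⊔ C, x ∈ W → x ∈ F := by
      intro x hx hxW
      obtain ⟨f, hf, c, hc, rfl⟩ := Submodule.mem_sup.mp hx
      have hcW : c ∈ W := by simpa using W.sub_mem hxW (hFW hf)
      have : c = 0 := (Submodule.disjoint_def.mp hC.disjoint) c hcW hc
      simpa [this] using hf
    have hcompl : IsCompl (E lst) (F ⊔ C) := by
      constructor
      · rw [Submodule.disjoint_def]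
        intro x hxE hxFC
        have hxF : x ∈ F := hFCW x hxFC (hW lst hxE)
        have : x ∈ E lst ⊓ F := ⟨hxE, hxF⟩
        rwa [hinf, Submodule.mem_bot] at this
      · rw [codisjoint_iff, ← sup_assoc, hsup, ← codisjoint_iff]
        exact hC.codisjoint
    set p := (E lst).linearProjOfIsCompl (F ⊔ C) hcompl with hp_def
    -- the projection `p` maps each `E j` into itself
    have hp : ∀ (j : Fin N) (x : V), x ∈ E j.castSucc → (p x : V) ∈ E j.castSucc := by
      intro j x hx
      have hdec := Submodule.projection_add_projection_eq_self hcompl x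
      set r := ((F ⊔ C).linearProjOfIsCompl (E lst) hcompl.symm x : V) with hr
      have hrFC : r ∈ F ⊔ C := ((F ⊔ C).linearProjOfIsCompl (E lst) hcompl.symm x).2
      have hrW : r ∈ W := by
        have hxW : x ∈ W := hW _ hx
        have hpW : (p x : V) ∈ W := hW lst (p x).2
        have : r = x - (p x : V) := eq_sub_of_add_eq' hdec
        rw [this]; exact W.sub_mem hxW hpW
      have hrF : r ∈ F := hFCW r hrFC hrW
      have : (p x : V) = x - r := eq_sub_of_add_eq hdec
      rw [this]
      exact (E j.castSucc).sub_mem hx (hFle j hrF)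
    -- the correction term
    set δ : AlternatingMap ℝ ↥(E lst) ℝ (Fin k) :=
      ω lst - Ω'.compLinearMap (E lst).subtype with hδ_def
    have hδ : ∀ j : Fin N,
        δ.compLinearMap
          (Submodule.inclusion (inf_le_right : E j.castSucc ⊓ E lst ≤ E lst)) = 0 := by
      intro j
      ext v
      have h1 := DFunLike.congr_fun (hcompat j.castSucc lst) v
      have h2 := DFunLike.congr_fun (hΩ' j)
        (fun i => Submodule.inclusion (inf_le_left : E j.castSucc ⊓ E lst ≤ E j.castSucc) (v i))
      simp only [AlternatingMap.compLinearMap_apply] at h1 h2 ⊢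
      have hcoe : ∀ i, ((E j.castSucc).subtype
          (Submodule.inclusion (inf_le_left : E j.castSucc ⊓ E lst ≤ E j.castSucc) (v i)))
          = ((E lst).subtype
            (Submodule.inclusion (inf_le_right : E j.castSucc ⊓ E lst ≤ E lst) (v i))) :=
        fun i => rfl
      simp only [hδ_def, AlternatingMap.sub_apply, AlternatingMap.compLinearMap_apply,
        AlternatingMap.zero_apply]
      rw [← h1, ← h2]
      simp only [hcoe]
      ring
    set Δ : AlternatingMap ℝ V ℝ (Fin k) := δ.compLinearMap (p : V →ₗ[ℝ] ↥(E lst)) with hΔ_def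
    refine ⟨Ω' + Δ, ?_⟩
    intro i
    induction i using Fin.lastCases with
    | last =>
      rw [AlternatingMap.add_compLinearMap]
      have hps : (p : V →ₗ[ℝ] ↥(E lst)) ∘ₗ (E lst).subtype = LinearMap.id := by
        apply LinearMap.ext; intro x
        exact Submodule.linearProjOfIsCompl_apply_left hcompl x
      have hΔl : Δ.compLinearMap (E lst).subtype = δ := by
        rw [hΔ_def, AlternatingMap.compLinearMap_assoc, hps, AlternatingMap.compLinearMap_id]
      rw [hΔl, hδ_def]
      abel
    | cast j =>
      rw [AlternatingMap.add_compLinearMap]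
      have hΔ0 : Δ.compLinearMap (E j.castSucc).subtype = 0 := by
        ext v
        simp only [hΔ_def, AlternatingMap.compLinearMap_apply, AlternatingMap.zero_apply]
        have hu : ∀ i, ((p ((v i : V))) : V) ∈ E j.castSucc ⊓ E lst := fun i =>
          ⟨hp j _ (v i).2, (p ((v i : V))).2⟩
        have heq : (fun i => p (((E j.castSucc).subtype (v i) : V)))
            = fun i => Submodule.inclusion (inf_le_right : E j.castSucc ⊓ E lst ≤ E lst)
                (⟨_, hu i⟩ : ↥(E j.castSucc ⊓ E lst)) := by
          funext i; apply Subtype.ext; rfl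
        rw [heq]
        have h0 := DFunLike.congr_fun (hδ j) (fun i => (⟨_, hu i⟩ : ↥(E j.castSucc ⊓ E lst)))
        simpa using h0
      rw [hΔ0, add_zero]
      exact hΩ' j

end Auxiliary

/-- an arrangement of subspaces of a finite-dimensional real vector space
which is minimally intersecting within its span has the `k`-extension property for all `k`. -/
theorem minimallyIntersectingWithin_span_hasExtensionProperty
    {V : Type*} [AddCommGroup V] [Module ℝ V] [FiniteDimensional ℝ V]
    {N : ℕ} (E : Fin N → Submodule ℝ V)
    (hE : IsMinimallyIntersectingWithin (⨆ i, E i) E) (k : ℕ) :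
    HasExtensionProperty k E := by
  obtain ⟨hW, hcodim⟩ := hE
  refine ext_aux N E (⨆ i, E i) hW ?_ k
  intro I hI
  obtain ⟨i0, hi0⟩ := hI
  have h := hcodim I ⟨i0, hi0⟩
  have hIle : finrank ℝ ↥(⨅ i ∈ I, E i) ≤ finrank ℝ ↥(⨆ i, E i) :=
    Submodule.finrank_mono ((iInf₂_le i0 hi0).trans (hW i0))
  have hle : ∀ i, finrank ℝ ↥(E i) ≤ finrank ℝ ↥(⨆ i, E i) := fun i =>
    Submodule.finrank_mono (hW i)
  have hnat : finrank ℝ ↥(⨅ i ∈ I, E i) +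
      ∑ i ∈ I, (finrank ℝ ↥(⨆ i, E i) - finrank ℝ ↥(E i)) = finrank ℝ ↥(⨆ i, E i) := by
    omega
  have hsum : ((∑ i ∈ I, (finrank ℝ ↥(⨆ i, E i) - finrank ℝ ↥(E i)) : ℕ) : ℤ)
      = ∑ i ∈ I, ((finrank ℝ ↥(⨆ i, E i) : ℤ) - finrank ℝ ↥(E i)) := by
    rw [Nat.cast_sum]
    exact Finset.sum_congr rfl fun i _ => Nat.cast_sub (hle i)
  have hcast : ((finrank ℝ ↥(⨅ i ∈ I, E i) : ℤ)) +
      ((∑ i ∈ I, (finrank ℝ ↥(⨆ i, E i) - finrank ℝ ↥(E i)) : ℕ) : ℤ)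
      = (finrank ℝ ↥(⨆ i, E i) : ℤ) := by exact_mod_cast hnat
  rw [hsum] at hcast
  exact hcast
end

section
/- Let k ≥ 0 and let S be a finite collection of linear subspaces of a finite-dimensional real vector space V such that every subcollection S' ⊆ S with |S'| ≤ k + 2 is a minimally intersecting arrangement in V. Then S has the k-extension property. -/
open Module Submodule

section Helpers

variable {V : Type*} [AddCommGroup V] [Module ℝ V] [FiniteDimensional ℝ V] {k : ℕ}

/-- If an alternating map on `F` vanishes on a submodule `W ≤ F` (in the sense that its
restriction is zero), then it vanishes on any tuple of elements of `F` lying in `W`. -/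
private lemma vanish_on_tuple {F W : Submodule ℝ V} (hWF : W ≤ F)
    {δ : AlternatingMap ℝ ↥F ℝ (Fin k)}
    (h : δ.compLinearMap (Submodule.inclusion hWF) = 0)
    (v : Fin k → ↥F) (hv : ∀ s, (v s : V) ∈ W) : δ v = 0 := by
  have hvv : v = fun s => Submodule.inclusion hWF ⟨(v s : V), hv s⟩ := by
    funext s; exact Subtype.ext rfl
  rw [hvv]
  have := DFunLike.congr_fun h (fun s => (⟨(v s : V), hv s⟩ : ↥W))
  simpa using this

/-- Case B: if `F ⊔ W = ⊤`, any alternating form on `F` extends to `V` in such a way that the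
extension vanishes on every subspace `G ⊇ W` on which the original form vanished
(after intersecting with `F`). -/
private lemma caseB {F W : Submodule ℝ V} (hFW : F ⊔ W = ⊤)
    (δ : AlternatingMap ℝ ↥F ℝ (Fin k)) :
    ∃ Δ : AlternatingMap ℝ V ℝ (Fin k),
      Δ.compLinearMap F.subtype = δ ∧
      ∀ G : Submodule ℝ V, W ≤ G →
        δ.compLinearMap (Submodule.inclusion (inf_le_left : F ⊓ G ≤ F)) = 0 →
        Δ.compLinearMap G.subtype = 0 := by
  obtain ⟨D', hD'⟩ := Submodule.exists_isCompl ((F ⊓ W).comap W.subtype)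
  set D₀ : Submodule ℝ V := D'.map W.subtype with hD₀def
  have hD₀W : D₀ ≤ W := by
    rintro x ⟨y, -, rfl⟩; exact y.2
  have hcompl : IsCompl F D₀ := by
    constructor
    · rw [disjoint_iff, eq_bot_iff]
      intro x hx
      obtain ⟨hxF, hxD⟩ := Submodule.mem_inf.mp hx
      have hxW : x ∈ W := hD₀W hxD
      have h2 : (⟨x, hxW⟩ : ↥W) ∈ D' := by
        obtain ⟨y, hy, hyx⟩ := hxD
        have : (⟨x, hxW⟩ : ↥W) = y := Subtype.ext hyx.symm
        rw [this]; exact hy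
      have h1 : (⟨x, hxW⟩ : ↥W) ∈ (F ⊓ W).comap W.subtype :=
        Submodule.mem_comap.mpr (Submodule.mem_inf.mpr ⟨hxF, hxW⟩)
      have : (⟨x, hxW⟩ : ↥W) ∈ ((F ⊓ W).comap W.subtype) ⊓ D' :=
        Submodule.mem_inf.mpr ⟨h1, h2⟩
      rw [hD'.inf_eq_bot] at this
      simpa [Submodule.mem_bot] using congrArg (Subtype.val) this
    · rw [codisjoint_iff, eq_top_iff]
      have hW : W ≤ F ⊔ D₀ := by
        intro w hw
        have hmem : (⟨w, hw⟩ : ↥W) ∈ ((F ⊓ W).comap W.subtype) ⊔ D' := by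
          rw [hD'.sup_eq_top]; trivial
        obtain ⟨y, hy, z, hz, hyz⟩ := Submodule.mem_sup.mp hmem
        have : w = (y : V) + (z : V) := by
          have := congrArg (Subtype.val) hyz; simpa using this.symm
        rw [this]
        exact Submodule.add_mem _ (Submodule.mem_sup_left (Submodule.mem_comap.mp hy).1)
          (Submodule.mem_sup_right ⟨z, hz, rfl⟩)
      calc (⊤ : Submodule ℝ V) = F ⊔ W := hFW.symm
        _ ≤ F ⊔ D₀ := sup_le le_sup_left hW
  set p : V →ₗ[ℝ] ↥F := Submodule.linearProjOfIsCompl F D₀ hcompl with hp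
  have hp1 : ∀ x : ↥F, p (x : V) = x := fun x =>
    Submodule.linearProjOfIsCompl_apply_left hcompl x
  have hp2 : ∀ x : V, x - (p x : V) ∈ W := by
    intro x
    have hsum := Submodule.projection_add_projection_eq_self hcompl x
    have : x - (p x : V) = ((D₀.linearProjOfIsCompl F hcompl.symm x : D₀) : V) :=
      sub_eq_iff_eq_add'.mpr hsum.symm
    rw [this]
    exact hD₀W (Submodule.coe_mem _)
  refine ⟨δ.compLinearMap p, ?_, ?_⟩
  · ext v
    simp only [AlternatingMap.compLinearMap_apply, Submodule.coe_subtype]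
    congr 1
    funext s
    exact hp1 (v s)
  · intro G hWG hvan
    ext v
    simp only [AlternatingMap.compLinearMap_apply, AlternatingMap.zero_apply,
      Submodule.coe_subtype]
    apply vanish_on_tuple (inf_le_left : F ⊓ G ≤ F) hvan
    intro s
    refine Submodule.mem_inf.mpr ⟨Submodule.coe_mem _, ?_⟩
    have : (p ((v s : V)) : V) = (v s : V) - ((v s : V) - (p ((v s : V)) : V)) := by abel
    rw [this]
    exact Submodule.sub_mem _ (Submodule.coe_mem (v s)) (hWG (hp2 _))

/-- The key sup formula for Case A, by induction on `L` with dimension counting. -/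
private lemma caseA_sup {ι : Type*} [DecidableEq ι] (E : ι → Submodule ℝ V)
    (F : Submodule ℝ V) (K : Finset ι) (n rF : ℕ) (r : ι → ℕ)
    (hd : ∀ S ⊆ K, finrank ℝ ↥(F ⊓ S.inf E) + (rF + ∑ j ∈ S, r j) = n) :
    ∀ L, L ⊆ K → L.Nonempty →
      (⨆ l ∈ L, (F ⊓ (K.erase l).inf E)) = F ⊓ (K \ L).inf E := by
  intro L
  induction L using Finset.induction_on with
  | empty => intro _ h; exact absurd h (by simp)
  | @insert b L' hb IH =>
    intro hsub _
    have hbK : b ∈ K := hsub (Finset.mem_insert_self b L')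
    have hL'K : L' ⊆ K := (Finset.subset_insert b L').trans hsub
    rcases L'.eq_empty_or_nonempty with rfl | hL'ne
    · simp [Finset.sdiff_singleton_eq_erase]
    · have hX := IH hL'K hL'ne
      rw [Finset.iSup_insert, hX]
      have hbL' : b ∈ K \ L' := Finset.mem_sdiff.mpr ⟨hbK, hb⟩
      have hset1 : K \ insert b L' = (K \ L').erase b := by
        ext x
        simp only [Finset.mem_sdiff, Finset.mem_insert, Finset.mem_erase]
        tauto
      have hsub1 : (F ⊓ (K.erase b).inf E) ⊔ (F ⊓ (K \ L').inf E)
          ≤ F ⊓ (K \ insert b L').inf E := by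
        refine sup_le (inf_le_inf_left F (Finset.inf_mono (f := E) ?_))
          (inf_le_inf_left F (Finset.inf_mono (f := E) ?_))
        · intro x hx
          simp only [Finset.mem_sdiff, Finset.mem_insert, Finset.mem_erase] at hx ⊢
          tauto
        · intro x hx
          simp only [Finset.mem_sdiff, Finset.mem_insert] at hx ⊢
          tauto
      have hint : (F ⊓ (K.erase b).inf E) ⊓ (F ⊓ (K \ L').inf E) = F ⊓ K.inf E := by
        have hU : (K.erase b) ∪ (K \ L') = K := by
          ext x
          simp only [Finset.mem_union, Finset.mem_erase, Finset.mem_sdiff]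
          constructor
          · tauto
          · intro hx
            by_cases hxb : x = b
            · subst hxb; right; exact ⟨hx, hb⟩
            · left; exact ⟨hxb, hx⟩
        have hlat : (F ⊓ (K.erase b).inf E) ⊓ (F ⊓ (K \ L').inf E)
            = F ⊓ ((K.erase b).inf E ⊓ (K \ L').inf E) :=
          le_antisymm
            (le_inf (inf_le_left.trans inf_le_left)
              (inf_le_inf inf_le_right inf_le_right))
            (le_inf (le_inf inf_le_left (inf_le_right.trans inf_le_left))
              (le_inf inf_le_left (inf_le_right.trans inf_le_right)))
        rw [hlat, ← Finset.inf_union, hU]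
      have e1 := hd (K \ L') (Finset.sdiff_subset)
      have e2 := hd (K.erase b) (Finset.erase_subset b K)
      have e3 := hd K subset_rfl
      have e4 := hd (K \ insert b L') (Finset.sdiff_subset)
      have grass := Submodule.finrank_sup_add_finrank_inf_eq
        (F ⊓ (K.erase b).inf E) (F ⊓ (K \ L').inf E)
      rw [hint] at grass
      have s1 : ∑ j ∈ (K \ L'), r j = ∑ j ∈ K \ insert b L', r j + r b := by
        rw [hset1]
        exact (Finset.sum_erase_add _ _ hbL').symm
      have s2 : ∑ j ∈ K, r j = ∑ j ∈ K.erase b, r j + r b :=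
        (Finset.sum_erase_add _ _ hbK).symm
      have hrank : finrank ℝ ↥((F ⊓ (K.erase b).inf E) ⊔ (F ⊓ (K \ L').inf E))
          = finrank ℝ ↥(F ⊓ (K \ insert b L').inf E) := by omega
      exact Submodule.eq_of_le_of_finrank_eq hsub1 hrank

/-- Case A: a `k`-form vanishing on `k+1` minimally intersecting constraints is zero. -/
private lemma caseA {ι : Type*} [DecidableEq ι] (E : ι → Submodule ℝ V)
    (F : Submodule ℝ V) (K : Finset ι) (n rF : ℕ) (r : ι → ℕ)
    (hK : K.card = k + 1)
    (hd : ∀ S ⊆ K, finrank ℝ ↥(F ⊓ S.inf E) + (rF + ∑ j ∈ S, r j) = n)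
    (δ : AlternatingMap ℝ ↥F ℝ (Fin k))
    (hvan : ∀ j ∈ K, δ.compLinearMap
      (Submodule.inclusion (inf_le_left : F ⊓ E j ≤ F)) = 0) :
    δ = 0 := by
  have hKne : K.Nonempty := Finset.card_pos.mp (by omega)
  have hFsup : (⨆ l ∈ K, (F ⊓ (K.erase l).inf E)) = F := by
    rw [caseA_sup E F K n rF r hd K subset_rfl hKne]
    simp
  ext v
  have hmem : ∀ s : Fin k, ((v s : V)) ∈ ⨆ l ∈ K, (F ⊓ (K.erase l).inf E) := by
    rw [hFsup]; exact fun s => (v s).2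
  choose μ hμ using fun s => (Submodule.mem_iSup_finset_iff_exists_sum _ _).mp (hmem s)
  set u : Fin k → ι → ↥F := fun s l => ⟨(μ s l : V), (μ s l).2.1⟩ with hu
  have hv : v = fun s => ∑ l ∈ K, u s l := by
    funext s
    apply Subtype.ext
    have : ((∑ l ∈ K, u s l : ↥F) : V) = ∑ l ∈ K, ((u s l : V)) :=
      Submodule.coe_sum F (fun l => u s l) K
    rw [this]
    exact (hμ s).symm
  rw [hv]
  have hexp : δ (fun s => ∑ l ∈ K, u s l)
      = ∑ g ∈ Fintype.piFinset (fun _ : Fin k => K), δ (fun s => u s (g s)) :=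
    δ.toMultilinearMap.map_sum_finset u (fun _ => K)
  rw [hexp, AlternatingMap.zero_apply]
  apply Finset.sum_eq_zero
  intro g hg
  have hgK : ∀ s, g s ∈ K := by
    intro s
    exact Fintype.mem_piFinset.mp hg s
  have hj : ∃ j ∈ K, ∀ s, j ≠ g s := by
    by_contra hcon
    push_neg at hcon
    have hsub : K ⊆ Finset.univ.image g := by
      intro j hjK
      obtain ⟨s, hs⟩ := hcon j hjK
      exact Finset.mem_image.mpr ⟨s, Finset.mem_univ s, hs.symm⟩
    have h1 := Finset.card_le_card hsub
    have h2 := Finset.card_image_le (s := (Finset.univ : Finset (Fin k))) (f := g)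
    simp only [Finset.card_univ, Fintype.card_fin] at h2
    omega
  obtain ⟨j, hjK, hjg⟩ := hj
  apply vanish_on_tuple (inf_le_left : F ⊓ E j ≤ F) (hvan j hjK)
  intro s
  refine Submodule.mem_inf.mpr ⟨(μ s (g s)).2.1, ?_⟩
  have hle : (K.erase (g s)).inf E ≤ E j :=
    Finset.inf_le (Finset.mem_erase.mpr ⟨hjg s, hjK⟩)
  exact hle (μ s (g s)).2.2

end Helpers

/-- if every subcollection of size at most `k + 2` of a finite collection `S`
of subspaces of a finite-dimensional real vector space `V` is a minimally intersecting
arrangement in `V`, then `S` has the `k`-extension property. -/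
theorem hasExtensionProperty_of_small_subcollections_minimallyIntersecting
    {V : Type*} [AddCommGroup V] [Module ℝ V] [FiniteDimensional ℝ V]
    (k : ℕ) {N : ℕ} (E : Fin N → Submodule ℝ V)
    (hE : ∀ I : Finset (Fin N), I.card ≤ k + 2 →
      IsMinimallyIntersecting (fun i : {i : Fin N // i ∈ I} => E i.1)) :
    HasExtensionProperty k E := by
  classical
  intro ω hcompat
  set n := finrank ℝ V with hn
  set r : Fin N → ℕ := fun i => n - finrank ℝ ↥(E i) with hrdef
  have hD : ∀ S : Finset (Fin N), S.Nonempty → S.card ≤ k + 2 →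
      finrank ℝ ↥(S.inf E) + ∑ i ∈ S, r i = n := by
    intro S hne hcard
    obtain ⟨x, hx⟩ := hne
    have hune : (Finset.univ : Finset {i : Fin N // i ∈ S}).Nonempty :=
      ⟨⟨x, hx⟩, Finset.mem_univ _⟩
    have h1 := hE S hcard Finset.univ hune
    have hiInf : (⨅ i ∈ (Finset.univ : Finset {i : Fin N // i ∈ S}),
        E (i : {i : Fin N // i ∈ S}).1) = S.inf E := by
      rw [Finset.inf_eq_iInf]
      simp only [Finset.mem_univ, iInf_true]
      exact iInf_subtype
    have hsum : ∑ i ∈ (Finset.univ : Finset {i : Fin N // i ∈ S}),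
        (n - finrank ℝ ↥(E i.1)) = ∑ i ∈ S, r i := by
      rw [Finset.univ_eq_attach]
      exact Finset.sum_attach S (fun i => n - finrank ℝ ↥(E i))
    rw [hiInf, hsum] at h1
    have hle : finrank ℝ ↥(S.inf E) ≤ n := Submodule.finrank_le _
    omega
  suffices h : ∀ M : Finset (Fin N), ∃ Ω : AlternatingMap ℝ V ℝ (Fin k),
      ∀ i ∈ M, Ω.compLinearMap (E i).subtype = ω i by
    obtain ⟨Ω, hΩ⟩ := h Finset.univ
    exact ⟨Ω, fun i => hΩ i (Finset.mem_univ i)⟩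
  intro M
  induction M using Finset.induction_on with
  | empty => exact ⟨0, by simp⟩
  | @insert a M haM IH =>
    obtain ⟨Ω', hΩ'⟩ := IH
    set δ : AlternatingMap ℝ ↥(E a) ℝ (Fin k) :=
      ω a - Ω'.compLinearMap (E a).subtype with hδ
    have hvan : ∀ i ∈ M, δ.compLinearMap
        (Submodule.inclusion (inf_le_left : E a ⊓ E i ≤ E a)) = 0 := by
      intro i hi
      ext v
      have h1 := DFunLike.congr_fun (hcompat a i) v
      simp only [AlternatingMap.compLinearMap_apply] at h1
      have h2 := DFunLike.congr_fun (hΩ' i hi)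
        (fun s => Submodule.inclusion (inf_le_right : E a ⊓ E i ≤ E i) (v s))
      simp only [AlternatingMap.compLinearMap_apply] at h2
      simp only [AlternatingMap.compLinearMap_apply, AlternatingMap.sub_apply,
        AlternatingMap.zero_apply, hδ]
      rw [h1, ← h2]
      have hcoe : (fun s => ((E a).subtype)
          (Submodule.inclusion (inf_le_left : E a ⊓ E i ≤ E a) (v s)))
          = fun s => ((E i).subtype)
          (Submodule.inclusion (inf_le_right : E a ⊓ E i ≤ E i) (v s)) := by
        funext s; rfl
      rw [hcoe, sub_self]
    by_cases hMk : M.card ≤ k + 1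
    · -- Case B
      have hWtop : E a ⊔ M.inf E = ⊤ := by
        rcases M.eq_empty_or_nonempty with rfl | hMne
        · simp
        · have e1 := hD M hMne (by omega)
          have e2 := hD (insert a M) (Finset.insert_nonempty a M)
            (by rw [Finset.card_insert_of_notMem haM]; omega)
          rw [Finset.inf_insert, Finset.sum_insert haM] at e2
          have grass := Submodule.finrank_sup_add_finrank_inf_eq (E a) (M.inf E)
          have hra : finrank ℝ ↥(E a) + r a = n := by
            have hle := Submodule.finrank_le (E a)
            simp only [hrdef]
            omega
          have hle2 := Submodule.finrank_le (E a ⊔ M.inf E)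
          have : finrank ℝ ↥(E a ⊔ M.inf E) = n := by omega
          exact Submodule.eq_top_of_finrank_eq this
      obtain ⟨Δ, hΔ1, hΔ2⟩ := caseB hWtop δ
      refine ⟨Ω' + Δ, ?_⟩
      intro i hi
      rcases Finset.mem_insert.mp hi with rfl | hiM
      · rw [AlternatingMap.add_compLinearMap, hΔ1, hδ]
        abel
      · rw [AlternatingMap.add_compLinearMap, hΩ' i hiM,
          hΔ2 (E i) (Finset.inf_le hiM) (hvan i hiM), add_zero]
    · -- Case A
      push_neg at hMk
      obtain ⟨K, hKM, hKcard⟩ := Finset.exists_subset_card_eq (le_of_lt hMk)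
      have haK : a ∉ K := fun h => haM (hKM h)
      have hd : ∀ S ⊆ K, finrank ℝ ↥(E a ⊓ S.inf E) + (r a + ∑ j ∈ S, r j) = n := by
        intro S hSK
        have haS : a ∉ S := fun h => haK (hSK h)
        have hcard : S.card ≤ k + 1 :=
          hKcard ▸ Finset.card_le_card hSK
        have := hD (insert a S) (Finset.insert_nonempty a S)
          (by rw [Finset.card_insert_of_notMem haS]; omega)
        rw [Finset.inf_insert, Finset.sum_insert haS] at this
        omega
      have hδ0 : δ = 0 := caseA E (E a) K n (r a) r hKcard hd δ
        (fun j hj => hvan j (hKM hj))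
      refine ⟨Ω', ?_⟩
      intro i hi
      rcases Finset.mem_insert.mp hi with rfl | hiM
      · have := sub_eq_zero.mp (hδ ▸ hδ0)
        exact this.symm
      · exact hΩ' i hiM
end

section
/- Let k ≥ 1 and let E_1, …, E_{k+1} be a minimally intersecting arrangement of linear subspaces of a finite-dimensional real vector space V. If an alternating k-form ω ∈ ⋀^k V^* restricts to zero on ⋀^k E_i for every i = 1, …, k+1, then ω = 0. (Equivalently: a k-form on V is uniquely determined by its restrictions to k + 1 minimally intersecting subspaces.) -/
open Module Submodule

/-- an alternating `k`-form (`k ≥ 1`) on a finite-dimensional real vector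
space which restricts to zero on each member of a minimally intersecting arrangement of `k + 1`
subspaces must vanish; equivalently, a `k`-form is determined by its restrictions to `k + 1`
minimally intersecting subspaces. -/
theorem alternatingMap_eq_zero_of_restrictions_zero
    {V : Type*} [AddCommGroup V] [Module ℝ V] [FiniteDimensional ℝ V]
    (k : ℕ) (hk : 1 ≤ k) (E : Fin (k + 1) → Submodule ℝ V)
    (hE : IsMinimallyIntersecting E) (ω : AlternatingMap ℝ V ℝ (Fin k))
    (hω : ∀ i, ω.compLinearMap (E i).subtype = 0) : ω = 0 := by
  classical
  set n := finrank ℝ V with hn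
  set c : Fin (k + 1) → ℕ := fun i => n - finrank ℝ ↥(E i) with hc
  -- basic facts about codimensions of intersections
  have hdim : ∀ I : Finset (Fin (k + 1)),
      finrank ℝ ↥(⨅ i ∈ I, E i) + ∑ i ∈ I, c i = n := by
    intro I
    rcases I.eq_empty_or_nonempty with rfl | hI
    · rw [show (⨅ i ∈ (∅ : Finset (Fin (k+1))), E i) = ⊤ by simp]
      simp [finrank_top, hn]
    · have h1 := hE I hI
      rw [← hn] at h1
      have h2 : finrank ℝ ↥(⨅ i ∈ I, E i) ≤ n := Submodule.finrank_le _
      simp only [hc]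
      omega
  -- the spaces W i = ⋂_{j ≠ i} E j
  set W : Fin (k + 1) → Submodule ℝ V := fun i => ⨅ j ∈ ({i}ᶜ : Finset (Fin (k+1))), E j
    with hW
  have hWle : ∀ i j, i ≠ j → W i ≤ E j := by
    intro i j hij
    exact iInf₂_le j (by simp [Ne.symm hij])
  -- key dimension estimate by induction on S
  have key : ∀ S : Finset (Fin (k + 1)), S.Nonempty →
      n ≤ finrank ℝ ↥(⨆ i ∈ S, W i) + ∑ j ∈ Sᶜ, c j := by
    intro S
    induction S using Finset.induction with
    | empty => intro h; exact absurd h (by simp)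
    | @insert j S hjS ih =>
      intro _
      rcases S.eq_empty_or_nonempty with rfl | hS
      · -- base case: single element
        have h5 : (⨆ i ∈ insert j (∅ : Finset (Fin (k+1))), W i) = W j := by simp
        have h6 : ((insert j (∅ : Finset (Fin (k+1))))ᶜ) = ({j}ᶜ : Finset (Fin (k+1))) := by
          simp
        rw [h5, h6]
        have h7 := hdim ({j}ᶜ : Finset (Fin (k+1)))
        have h8 : finrank ℝ ↥(W j) = finrank ℝ ↥(⨅ i ∈ ({j}ᶜ : Finset (Fin (k+1))), E i) := rfl
        rw [h8]
        omega
      · have ihS := ih hS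
        set A := ⨆ i ∈ S, W i with hA
        have hsup : (⨆ i ∈ insert j S, W i) = W j ⊔ A := by
          rw [Finset.iSup_insert]
        rw [hsup]
        -- A ⊓ W j ≤ ⋂ all E
        have hAle : A ≤ ⨅ l ∈ (Sᶜ : Finset (Fin (k+1))), E l := by
          apply iSup_le; intro i; apply iSup_le; intro hi
          apply le_iInf; intro l; apply le_iInf; intro hl
          apply hWle
          intro h; subst h
          exact (Finset.mem_compl.mp hl) hi
        have hinf : W j ⊓ A ≤ ⨅ l ∈ (Finset.univ : Finset (Fin (k+1))), E l := by
          apply le_iInf; intro l; apply le_iInf; intro _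
          by_cases hlj : l = j
          · subst hlj
            by_cases hlS : l ∈ S
            · exact inf_le_right.trans (hAle.trans (iInf₂_le _ (Finset.mem_compl.mpr (fun h => hjS hlS))))
            · exact inf_le_right.trans (hAle.trans (iInf₂_le _ (Finset.mem_compl.mpr hlS)))
          · exact inf_le_left.trans (hWle j l (Ne.symm hlj))
        have hinf' : finrank ℝ ↥(W j ⊓ A) ≤ finrank ℝ ↥(⨅ l ∈ (Finset.univ : Finset (Fin (k+1))), E l) :=
          Submodule.finrank_mono hinf
        have hsum := Submodule.finrank_sup_add_finrank_inf_eq (W j) A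
        have hWj := hdim ({j}ᶜ : Finset (Fin (k+1)))
        have hWjdim : finrank ℝ ↥(W j) + ∑ i ∈ ({j}ᶜ : Finset (Fin (k+1))), c i = n := hWj
        have huniv := hdim (Finset.univ : Finset (Fin (k+1)))
        -- sums
        have hsum1 : ∑ i ∈ ({j}ᶜ : Finset (Fin (k+1))), c i + c j = ∑ i, c i := by
          rw [← Finset.sum_compl_add_sum ({j} : Finset (Fin (k+1))) c, Finset.sum_singleton]
        have hsum2 : ∑ i ∈ ((insert j S)ᶜ : Finset (Fin (k+1))), c i + c j
            = ∑ i ∈ (Sᶜ : Finset (Fin (k+1))), c i := by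
          have : (Sᶜ : Finset (Fin (k+1))) = insert j ((insert j S)ᶜ) := by
            ext l
            simp only [Finset.mem_compl, Finset.mem_insert]
            by_cases hlj : l = j
            · subst hlj; simp [hjS]
            · simp [hlj]
          rw [this, Finset.sum_insert (by simp)]
          ring
        omega
  have keyuniv := key Finset.univ Finset.univ_nonempty
  have htop : (⨆ i, W i) = ⊤ := by
    have h1 : (⨆ i ∈ (Finset.univ : Finset (Fin (k+1))), W i) = ⨆ i, W i := by
      simp
    rw [← h1]
    apply Submodule.eq_top_of_finrank_eq
    have h2 : finrank ℝ ↥(⨆ i ∈ (Finset.univ : Finset (Fin (k+1))), W i) ≤ n :=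
      Submodule.finrank_le _
    have h3 : ∑ j ∈ ((Finset.univ : Finset (Fin (k+1)))ᶜ), c j = 0 := by simp
    omega
  -- now the multilinear argument
  ext v
  have hv : ∀ m : Fin k, ∃ w : Fin (k + 1) → V, (∀ i, w i ∈ W i) ∧ ∑ i, w i = v m := by
    intro m
    have : v m ∈ ⨆ i, W i := htop ▸ Submodule.mem_top
    rw [Submodule.mem_iSup_iff_exists_finsupp] at this
    obtain ⟨f, hf, hfs⟩ := this
    exact ⟨fun i => f i, hf, by rwa [Finsupp.sum_fintype _ _ (fun _ => rfl)] at hfs⟩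
  choose w hwmem hwsum using hv
  have hv' : v = fun m => ∑ i, w m i := by
    funext m; exact (hwsum m).symm
  rw [AlternatingMap.zero_apply, hv']
  have := ω.toMultilinearMap.map_sum (g := w) (α := fun _ => Fin (k + 1))
  simp only [AlternatingMap.coe_multilinearMap] at this
  rw [this]
  apply Finset.sum_eq_zero
  intro r _
  -- r is not surjective
  have hns : ¬ Function.Surjective r := by
    intro hsurj
    have := Fintype.card_le_of_surjective r hsurj
    simp [Fintype.card_fin] at this
  rw [Function.Surjective] at hns
  push_neg at hns
  obtain ⟨i₀, hi₀⟩ := hns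
  have hmem : ∀ m, w m (r m) ∈ E i₀ := fun m =>
    hWle (r m) i₀ (fun h => (hi₀ m) h) (hwmem m (r m))
  have := congrFun (congrArg (fun f => f.toFun) (hω i₀)) (fun m => ⟨w m (r m), hmem m⟩)
  simpa using this
end

section
/- Fix p ≥ 1 and let S = {E_i}_{i=1}^N be an arrangement of linear subspaces of ℝ^n satisfying one of the following: (a) S is a minimally intersecting arrangement in ℝ^n; or (b) every subcollection of S of size at most p + 3 is minimally intersecting in ℝ^n; or (c) N = 3. Then for any alternating p-forms R_{ij} ∈ ⋀^p(E_i ∩ E_j)^* (i < j) satisfying R_{ij} − R_{ik} + R_{jk} = 0 on ⋀^p(E_i ∩ E_j ∩ E_k) for all i < j < k, there exist L_i ∈ ⋀^p E_i^* such that R_{ij} equals the restriction of L_j − L_i to ⋀^p(E_i ∩ E_j) for all i < j. -/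
open Module Submodule


section ArrangementHelpers

variable {V : Type*} [AddCommGroup V] [Module ℝ V]

/-- A complement of `C` inside `A`, for `C ≤ A`. -/
lemma aux_exists_compl_within {C A : Submodule ℝ V} (h : C ≤ A) :
    ∃ A' : Submodule ℝ V, A' ≤ A ∧ Disjoint C A' ∧ C ⊔ A' = A := by
  obtain ⟨q, hq⟩ := Submodule.exists_isCompl (C.comap A.subtype)
  refine ⟨q.map A.subtype, Submodule.map_subtype_le A q, ?_, ?_⟩
  · rw [disjoint_iff, eq_bot_iff]
    rintro x ⟨hxC, hxq⟩
    obtain ⟨y, hy, rfl⟩ := hxq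
    have : y ∈ C.comap A.subtype ⊓ q := ⟨hxC, hy⟩
    rw [hq.inf_eq_bot] at this
    simp only [Submodule.mem_bot] at this
    simp [this]
  · have := congrArg (Submodule.map A.subtype) hq.sup_eq_top
    rwa [Submodule.map_sup, Submodule.map_top, Submodule.range_subtype,
      Submodule.map_comap_subtype, inf_eq_right.mpr h] at this

/-- Extend a subspace disjoint from `B` to a full complement of `B`. -/
lemma aux_exists_extend_compl {B A' : Submodule ℝ V} (h : Disjoint B A') :
    ∃ D, A' ≤ D ∧ IsCompl B D := by
  obtain ⟨D₀, hD₀⟩ := Submodule.exists_isCompl (B ⊔ A')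
  refine ⟨A' ⊔ D₀, le_sup_left, ⟨?_, ?_⟩⟩
  · rw [disjoint_iff, eq_bot_iff]
    rintro x ⟨hxB, hx⟩
    obtain ⟨a, ha, d, hd, rfl⟩ := Submodule.mem_sup.mp hx
    have hdmem : d ∈ (B ⊔ A') ⊓ D₀ := by
      constructor
      · have : (a + d) - a ∈ B ⊔ A' := sub_mem (le_sup_left (α := Submodule ℝ V) hxB)
          (le_sup_right (α := Submodule ℝ V) ha)
        simpa using this
      · exact hd
    rw [hD₀.inf_eq_bot] at hdmem
    simp only [Submodule.mem_bot] at hdmem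
    subst hdmem
    have : a ∈ B ⊓ A' := ⟨by simpa using hxB, ha⟩
    rw [h.eq_bot] at this
    simp only [Submodule.mem_bot] at this
    simp [this]
  · rw [codisjoint_iff, eq_top_iff]
    calc (⊤ : Submodule ℝ V) = (B ⊔ A') ⊔ D₀ := hD₀.sup_eq_top.symm
    _ ≤ B ⊔ (A' ⊔ D₀) := by rw [sup_assoc]

/-- A projection onto `B` which maps `A` into `A ⊓ B`. -/
lemma aux_exists_pair_proj (A B : Submodule ℝ V) :
    ∃ q : V →ₗ[ℝ] V, (∀ x ∈ B, q x = x) ∧ (∀ x, q x ∈ B) ∧ (∀ x ∈ A, q x ∈ A ⊓ B) := by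
  obtain ⟨A', hA'A, hdisj, hsup⟩ := aux_exists_compl_within (inf_le_left : A ⊓ B ≤ A)
  have hBA' : Disjoint B A' := by
    rw [disjoint_iff, eq_bot_iff]
    rintro x ⟨hxB, hxA'⟩
    have : x ∈ (A ⊓ B) ⊓ A' := ⟨⟨hA'A hxA', hxB⟩, hxA'⟩
    rw [hdisj.eq_bot] at this
    exact this
  obtain ⟨D, hA'D, hcompl⟩ := aux_exists_extend_compl hBA'
  refine ⟨B.subtype.comp (Submodule.projectionOnto B D hcompl), ?_, ?_, ?_⟩
  · intro x hx
    have := Submodule.linearProjOfIsCompl_apply_left hcompl ⟨x, hx⟩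
    simp only [LinearMap.comp_apply, Submodule.coe_subtype]
    rw [this]
  · intro x
    exact (Submodule.projectionOnto B D hcompl x).2
  · intro x hx
    rw [← hsup] at hx
    obtain ⟨c, hc, a, ha, rfl⟩ := Submodule.mem_sup.mp hx
    have h1 : Submodule.projectionOnto B D hcompl c = ⟨c, hc.2⟩ :=
      Submodule.linearProjOfIsCompl_apply_left hcompl ⟨c, hc.2⟩
    have h2 : Submodule.projectionOnto B D hcompl a = 0 :=
      Submodule.linearProjOfIsCompl_apply_right hcompl ⟨a, hA'D ha⟩
    simp only [LinearMap.comp_apply, map_add, h1, h2, add_zero, Submodule.coe_subtype,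
      ZeroMemClass.coe_zero]
    exact hc

/-- `ω` vanishes when all arguments are in `W`. -/
def AuxVOn {q : ℕ} (ω : AlternatingMap ℝ V ℝ (Fin q)) (W : Submodule ℝ V) : Prop :=
  ∀ v : Fin q → V, (∀ l, v l ∈ W) → ω v = 0

lemma AuxVOn.mono {q : ℕ} {ω : AlternatingMap ℝ V ℝ (Fin q)} {W W' : Submodule ℝ V}
    (h : AuxVOn ω W) (hle : W' ≤ W) : AuxVOn ω W' := fun v hv => h v fun l => hle (hv l)

/-- Splitting a form vanishing on `A ⊓ B` into pieces vanishing on `A` resp. `B`. -/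
lemma aux_pair_decomp {q : ℕ} {ω : AlternatingMap ℝ V ℝ (Fin q)} {A B : Submodule ℝ V}
    (h : AuxVOn ω (A ⊓ B)) :
    ∃ α β : AlternatingMap ℝ V ℝ (Fin q), ω = α + β ∧ AuxVOn α A ∧ AuxVOn β B := by
  obtain ⟨f, hfB, hfran, hfA⟩ := aux_exists_pair_proj A B
  refine ⟨ω.compLinearMap f, ω - ω.compLinearMap f, by abel, ?_, ?_⟩
  · intro v hv
    simp only [AlternatingMap.compLinearMap_apply]
    exact h _ (fun l => hfA _ (hv l))
  · intro v hv
    have : (fun l => f (v l)) = v := funext fun l => hfB _ (hv l)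
    simp only [AlternatingMap.sub_apply, AlternatingMap.compLinearMap_apply, this, sub_self]

end ArrangementHelpers

/-- The compatible projection coming from a minimally intersecting family. -/
lemma aux_exists_triple_proj {n N : ℕ} (E : Fin N → Submodule ℝ (Fin n → ℝ))
    (G : Finset (Fin N)) (K T : Fin N) (hK : K ∈ G) (hT : T ∈ G) (hKT : K ≠ T)
    (hG : ∀ I ⊆ G, I.Nonempty →
      finrank ℝ ↥(I.inf E) + ∑ i ∈ I, (n - finrank ℝ ↥(E i)) = n) :
    ∃ π : (Fin n → ℝ) →ₗ[ℝ] (Fin n → ℝ),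
      (∀ x ∈ E K ⊓ E T, π x = x) ∧ (∀ x, π x ∈ E K ⊓ E T) ∧
      (∀ i ∈ G, i ≠ K → i ≠ T → ∀ x ∈ E i, π x ∈ E i) := by
  classical
  set c : Fin N → ℕ := fun i => n - finrank ℝ ↥(E i) with hc
  set W : Submodule ℝ (Fin n → ℝ) := G.inf E with hW
  set DK : Submodule ℝ (Fin n → ℝ) := (G.erase K).inf E with hDK
  set DT : Submodule ℝ (Fin n → ℝ) := (G.erase T).inf E with hDT
  have hWDK : W ≤ DK := Finset.inf_mono (Finset.erase_subset _ _)
  have hWDT : W ≤ DT := Finset.inf_mono (Finset.erase_subset _ _)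
  obtain ⟨CK, hCKD, hCKdisj, hCKsup⟩ := aux_exists_compl_within hWDK
  obtain ⟨CT, hCTD, hCTdisj, hCTsup⟩ := aux_exists_compl_within hWDT
  set F : Submodule ℝ (Fin n → ℝ) := E K ⊓ E T with hF
  have hrW : finrank ℝ ↥W + ∑ i ∈ G, c i = n := hG G Finset.Subset.rfl ⟨K, hK⟩
  have hrDK : finrank ℝ ↥DK + ∑ i ∈ G.erase K, c i = n :=
    hG _ (Finset.erase_subset _ _) ⟨T, Finset.mem_erase.mpr ⟨Ne.symm hKT, hT⟩⟩
  have hrDT : finrank ℝ ↥DT + ∑ i ∈ G.erase T, c i = n :=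
    hG _ (Finset.erase_subset _ _) ⟨K, Finset.mem_erase.mpr ⟨hKT, hK⟩⟩
  have hrF : finrank ℝ ↥F + (c K + c T) = n := by
    have hsub : ({K, T} : Finset (Fin N)) ⊆ G := by
      intro x hx
      rcases Finset.mem_insert.mp hx with rfl | hx
      · exact hK
      · rw [Finset.mem_singleton] at hx; subst hx; exact hT
    have := hG {K, T} hsub ⟨K, Finset.mem_insert_self _ _⟩
    rwa [Finset.inf_insert, Finset.inf_singleton, Finset.sum_pair hKT] at this
  have hsumK : ∑ i ∈ G.erase K, c i + c K = ∑ i ∈ G, c i := Finset.sum_erase_add G c hK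
  have hsumT : ∑ i ∈ G.erase T, c i + c T = ∑ i ∈ G, c i := Finset.sum_erase_add G c hT
  have hrCK : finrank ℝ ↥CK = c K := by
    have h1 := Submodule.finrank_sup_add_finrank_inf_eq W CK
    rw [hCKsup, hCKdisj.eq_bot, finrank_bot] at h1
    omega
  have hrCT : finrank ℝ ↥CT = c T := by
    have h1 := Submodule.finrank_sup_add_finrank_inf_eq W CT
    rw [hCTsup, hCTdisj.eq_bot, finrank_bot] at h1
    omega
  have hDKT : DK ⊓ DT ≤ W := by
    rw [hW, hDK, hDT, ← Finset.inf_union]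
    apply Finset.inf_mono
    intro x hx
    rcases eq_or_ne x K with rfl | hxK
    · exact Finset.mem_union_right _ (Finset.mem_erase.mpr ⟨hKT, hx⟩)
    · exact Finset.mem_union_left _ (Finset.mem_erase.mpr ⟨hxK, hx⟩)
  have hCKT : Disjoint CK CT := by
    rw [disjoint_iff, eq_bot_iff]
    rintro x ⟨hx1, hx2⟩
    have hxW : x ∈ W := hDKT ⟨hCKD hx1, hCTD hx2⟩
    have : x ∈ W ⊓ CK := ⟨hxW, hx1⟩
    rw [hCKdisj.eq_bot] at this
    exact this
  have hrC : finrank ℝ ↥(CK ⊔ CT) = c K + c T := by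
    have h1 := Submodule.finrank_sup_add_finrank_inf_eq CK CT
    rw [hCKT.eq_bot, finrank_bot] at h1
    omega
  have hCKEK : ∀ i ∈ G, i ≠ K → CK ≤ E i := fun i hi hiK =>
    le_trans hCKD (Finset.inf_le (Finset.mem_erase.mpr ⟨hiK, hi⟩))
  have hCTEi : ∀ i ∈ G, i ≠ T → CT ≤ E i := fun i hi hiT =>
    le_trans hCTD (Finset.inf_le (Finset.mem_erase.mpr ⟨hiT, hi⟩))
  have hdisjF : Disjoint F (CK ⊔ CT) := by
    rw [disjoint_iff, eq_bot_iff]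
    rintro x ⟨hxF, hxC⟩
    obtain ⟨a, ha, b, hb, rfl⟩ := Submodule.mem_sup.mp hxC
    have haEK : a ∈ E K := by
      have hbEK : b ∈ E K := hCTEi K hK hKT hb
      have : (a + b) - b ∈ E K := sub_mem hxF.1 hbEK
      simpa using this
    have haW : a ∈ W := by
      have : a ∈ DK ⊓ E K := ⟨hCKD ha, haEK⟩
      have hrw : DK ⊓ E K ≤ W := by
        rw [hW, ← Finset.insert_erase hK, Finset.inf_insert, inf_comm]
      exact hrw this
    have ha0 : a = 0 := by
      have : a ∈ W ⊓ CK := ⟨haW, ha⟩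
      rw [hCKdisj.eq_bot] at this
      exact this
    subst ha0
    have hbET : b ∈ E T := by simpa using hxF.2
    have hbW : b ∈ W := by
      have : b ∈ DT ⊓ E T := ⟨hCTD hb, hbET⟩
      have hrw : DT ⊓ E T ≤ W := by
        rw [hW, ← Finset.insert_erase hT, Finset.inf_insert, inf_comm]
      exact hrw this
    have : b ∈ W ⊓ CT := ⟨hbW, hb⟩
    rw [hCTdisj.eq_bot] at this
    simpa using this
  have hsupF : F ⊔ (CK ⊔ CT) = ⊤ := by
    apply Submodule.eq_top_of_finrank_eq
    have h1 := Submodule.finrank_sup_add_finrank_inf_eq F (CK ⊔ CT)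
    rw [hdisjF.eq_bot, finrank_bot] at h1
    rw [Module.finrank_fin_fun ℝ]
    omega
  have hcompl : IsCompl F (CK ⊔ CT) := ⟨hdisjF, codisjoint_iff.mpr hsupF⟩
  refine ⟨F.subtype.comp (Submodule.projectionOnto F _ hcompl), ?_, ?_, ?_⟩
  · intro x hx
    have := Submodule.linearProjOfIsCompl_apply_left hcompl ⟨x, hx⟩
    simp only [LinearMap.comp_apply, Submodule.coe_subtype]
    rw [this]
  · intro x
    exact (Submodule.projectionOnto F _ hcompl x).2
  · intro i hi hiK hiT x hx
    have hxtop : x ∈ F ⊔ (CK ⊔ CT) := by rw [hsupF]; exact Submodule.mem_top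
    obtain ⟨f, hf, y, hy, rfl⟩ := Submodule.mem_sup.mp hxtop
    have h1 : Submodule.projectionOnto F _ hcompl f = ⟨f, hf⟩ :=
      Submodule.linearProjOfIsCompl_apply_left hcompl ⟨f, hf⟩
    have h2 : Submodule.projectionOnto F _ hcompl y = 0 :=
      Submodule.linearProjOfIsCompl_apply_right hcompl ⟨y, hy⟩
    have hyEi : y ∈ E i := by
      have : CK ⊔ CT ≤ E i := sup_le (hCKEK i hi hiK) (hCTEi i hi hiT)
      exact this hy
    have hfEi : f ∈ E i := by
      have : (f + y) - y ∈ E i := sub_mem hx hyEi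
      simpa using this
    simp only [LinearMap.comp_apply, map_add, h1, h2, add_zero, Submodule.coe_subtype,
      ZeroMemClass.coe_zero]
    exact hfEi

/-- A `q`-form vanishing on each member of a minimally intersecting family of `q+1`
subspaces vanishes. -/
lemma aux_vanish_of_vanish_all {n N q : ℕ} (hq : 1 ≤ q) (E : Fin N → Submodule ℝ (Fin n → ℝ))
    (S : Finset (Fin N)) (hcard : S.card = q + 1)
    (hG : ∀ I ⊆ S, I.Nonempty →
      finrank ℝ ↥(I.inf E) + ∑ i ∈ I, (n - finrank ℝ ↥(E i)) = n)
    (ω : AlternatingMap ℝ (Fin n → ℝ) ℝ (Fin q))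
    (hω : ∀ j ∈ S, AuxVOn ω (E j)) : ω = 0 := by
  classical
  set c : Fin N → ℕ := fun i => n - finrank ℝ ↥(E i) with hc
  set W : Submodule ℝ (Fin n → ℝ) := S.inf E with hW
  have hSne : S.Nonempty := Finset.card_pos.mp (by omega)
  have hDle : ∀ (j : {x // x ∈ S}) (i : Fin N), i ∈ S → i ≠ ↑j →
      (S.erase ↑j).inf E ≤ E i := fun j i hi hij =>
    Finset.inf_le (Finset.mem_erase.mpr ⟨hij, hi⟩)
  have hWle : ∀ i ∈ S, W ≤ E i := fun i hi => Finset.inf_le hi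
  have hchoice : ∀ j : {x // x ∈ S}, ∃ C : Submodule ℝ (Fin n → ℝ),
      C ≤ (S.erase ↑j).inf E ∧ Disjoint W C ∧ W ⊔ C = (S.erase ↑j).inf E := fun j =>
    aux_exists_compl_within (Finset.inf_mono (Finset.erase_subset _ _))
  choose C hCle hCdisj hCsup using hchoice
  have hrW : finrank ℝ ↥W + ∑ i ∈ S, c i = n := hG S Finset.Subset.rfl hSne
  have hrC : ∀ j : {x // x ∈ S}, finrank ℝ ↥(C j) = c ↑j := by
    intro j
    have hne : (S.erase ↑j).Nonempty := by
      rw [← Finset.card_pos, Finset.card_erase_of_mem j.2]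
      omega
    have hrD : finrank ℝ ↥((S.erase ↑j).inf E) + ∑ i ∈ S.erase ↑j, c i = n :=
      hG _ (Finset.erase_subset _ _) hne
    have hsum : ∑ i ∈ S.erase ↑j, c i + c ↑j = ∑ i ∈ S, c i := Finset.sum_erase_add S c j.2
    have h1 := Submodule.finrank_sup_add_finrank_inf_eq W (C j)
    rw [hCsup, (hCdisj j).eq_bot, finrank_bot] at h1
    omega
  set σ : (↥W × ((j : {x // x ∈ S}) → ↥(C j))) →ₗ[ℝ] (Fin n → ℝ) :=
    { toFun := fun x => (x.1 : Fin n → ℝ) + ∑ j, (x.2 j : Fin n → ℝ)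
      map_add' := by
        intro a b
        simp only [Prod.fst_add, Submodule.coe_add, Prod.snd_add, Pi.add_apply]
        rw [Finset.sum_add_distrib]
        abel
      map_smul' := by
        intro r a
        simp only [Prod.smul_fst, Prod.smul_snd, SetLike.val_smul, Pi.smul_apply,
          RingHom.id_apply]
        rw [← Finset.smul_sum, smul_add] } with hσ
  have hinj : Function.Injective σ := by
    rw [← LinearMap.ker_eq_bot, eq_bot_iff]
    rintro ⟨w, x⟩ hx
    simp only [LinearMap.mem_ker, hσ, LinearMap.coe_mk, AddHom.coe_mk] at hx
    have hx2 : ∀ j, x j = 0 := by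
      intro j
      have hxj : (x j : Fin n → ℝ) ∈ E ↑j := by
        have heq : (x j : Fin n → ℝ) = -((w : Fin n → ℝ) + ∑ i ∈ Finset.univ.erase j,
            (x i : Fin n → ℝ)) := by
          have h5 := Finset.sum_erase_add Finset.univ (fun i => (x i : Fin n → ℝ))
            (Finset.mem_univ j)
          rw [← h5] at hx
          have h6 : (w : Fin n → ℝ) + (∑ i ∈ Finset.univ.erase j, (x i : Fin n → ℝ) +
              (x j : Fin n → ℝ)) = 0 := hx
          linear_combination h6
        rw [heq]
        apply neg_mem
        apply add_mem (hWle _ j.2 w.2)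
        apply Submodule.sum_mem
        intro i hi
        have hij : i ≠ j := (Finset.mem_erase.mp hi).1
        have hne2 : (↑j : Fin N) ≠ ↑i := fun h => hij (Subtype.ext h.symm)
        exact hDle i ↑j j.2 hne2 (hCle i (x i).2)
      have hxjW : (x j : Fin n → ℝ) ∈ W := by
        have h1 : (x j : Fin n → ℝ) ∈ (S.erase ↑j).inf E := hCle j (x j).2
        have h2 : (x j : Fin n → ℝ) ∈ E ↑j ⊓ (S.erase ↑j).inf E := ⟨hxj, h1⟩
        have hrw : (insert (↑j : Fin N) (S.erase ↑j)).inf E = E ↑j ⊓ (S.erase ↑j).inf E :=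
          Finset.inf_insert
        rw [Finset.insert_erase j.2] at hrw
        rw [hW, hrw]
        exact h2
      have : (x j : Fin n → ℝ) ∈ W ⊓ C j := ⟨hxjW, (x j).2⟩
      rw [(hCdisj j).eq_bot] at this
      exact Subtype.ext this
    have hw : w = 0 := by
      have h7 : (w : Fin n → ℝ) + ∑ j, (x j : Fin n → ℝ) = 0 := hx
      rw [Finset.sum_eq_zero (fun j _ => by rw [hx2 j]; rfl), add_zero] at h7
      exact Subtype.ext h7
    simp only [Submodule.mem_bot, Prod.mk_eq_zero]
    exact ⟨hw, funext hx2⟩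
  have hsurj : Function.Surjective σ := by
    have hfr : finrank ℝ (↥W × ((j : {x // x ∈ S}) → ↥(C j))) = finrank ℝ (Fin n → ℝ) := by
      rw [Module.finrank_prod, Module.finrank_pi_fintype, Module.finrank_fin_fun ℝ]
      have : ∑ j : {x // x ∈ S}, finrank ℝ ↥(C j) = ∑ i ∈ S, c i := by
        rw [Finset.sum_congr rfl (fun j _ => hrC j)]
        exact Finset.sum_attach S c
      omega
    exact (LinearMap.injective_iff_surjective_of_finrank_eq_finrank hfr).mp hinj
  ext v
  simp only [AlternatingMap.zero_apply]
  have hdec : ∀ l, ∃ y : ↥W × ((j : {x // x ∈ S}) → ↥(C j)), σ y = v l := fun l => hsurj (v l)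
  choose y hy using hdec
  set g : Fin q → Option {x // x ∈ S} → (Fin n → ℝ) := fun l o =>
    Option.rec ((y l).1 : Fin n → ℝ) (fun j => ((y l).2 j : Fin n → ℝ)) o with hg
  have hvg : v = fun l => ∑ o : Option {x // x ∈ S}, g l o := by
    funext l
    rw [Fintype.sum_option]
    exact (hy l).symm
  rw [hvg, ← AlternatingMap.coe_multilinearMap,
    MultilinearMap.map_sum ω.toMultilinearMap g]
  apply Finset.sum_eq_zero
  intro r _
  have hj0 : ∃ j₀ : {x // x ∈ S}, ∀ l, r l ≠ some j₀ := by
    by_contra hcon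
    push_neg at hcon
    choose t ht using hcon
    have hinjt : Function.Injective t := by
      intro a b hab
      have : some a = some b := by rw [← ht a, ← ht b, hab]
      exact Option.some_injective _ this
    have := Fintype.card_le_of_injective t hinjt
    rw [Fintype.card_coe, hcard, Fintype.card_fin] at this
    omega
  obtain ⟨j₀, hj₀⟩ := hj0
  have hmem : ∀ l, g l (r l) ∈ E ↑j₀ := by
    intro l
    rcases hrl : r l with _ | j
    · simp only [hg, hrl]
      exact hWle _ j₀.2 ((y l).1).2
    · have hne : (↑j₀ : Fin N) ≠ ↑j := by
        intro h
        exact hj₀ l (by rw [hrl, Subtype.ext h.symm])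
      simp only [hg, hrl]
      exact hDle j ↑j₀ j₀.2 hne (hCle j (((y l).2 j)).2)
  exact hω ↑j₀ j₀.2 _ hmem

/-- let `p ≥ 1` and let `E 1, …, E N` be an arrangement of subspaces of `ℝ^n`
which is (a) minimally intersecting, or (b) such that every subcollection of size at most
`p + 3` is minimally intersecting, or (c) of size `N = 3`.  Then every cocycle `(R i j)_{i<j}`
of alternating `p`-forms on pairwise intersections (`R i j - R i k + R j k = 0` on
`⋀^p(E i ∩ E j ∩ E k)` for `i < j < k`) is a coboundary: there are `p`-forms `L i` on `E i`
with `R i j = L j - L i` on `⋀^p(E i ∩ E j)`. -/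
theorem cocycle_is_coboundary_of_minimallyIntersecting {n N : ℕ} (p : ℕ) (hp : 1 ≤ p)
    (E : Fin N → Submodule ℝ (Fin n → ℝ))
    (hE : IsMinimallyIntersecting E ∨
      (∀ I : Finset (Fin N), I.card ≤ p + 3 →
        IsMinimallyIntersecting (fun i : {i : Fin N // i ∈ I} => E i.1)) ∨
      N = 3)
    (R : (i j : Fin N) → AlternatingMap ℝ ↥(E i ⊓ E j) ℝ (Fin p))
    (hR : ∀ i j k : Fin N, i < j → j < k →
      (R i j).compLinearMap
          (Submodule.inclusion (inf_le_left : E i ⊓ E j ⊓ E k ≤ E i ⊓ E j)) -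
        (R i k).compLinearMap
          (Submodule.inclusion (le_inf (le_trans inf_le_left inf_le_left) inf_le_right :
            E i ⊓ E j ⊓ E k ≤ E i ⊓ E k)) +
        (R j k).compLinearMap
          (Submodule.inclusion (le_inf (le_trans inf_le_left inf_le_right) inf_le_right :
            E i ⊓ E j ⊓ E k ≤ E j ⊓ E k)) = 0) :
    ∃ L : (i : Fin N) → AlternatingMap ℝ ↥(E i) ℝ (Fin p),
      ∀ i j : Fin N, i < j →
        R i j =
          (L j).compLinearMap (Submodule.inclusion (inf_le_right : E i ⊓ E j ≤ E j)) -
            (L i).compLinearMap (Submodule.inclusion (inf_le_left : E i ⊓ E j ≤ E i)) := by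
  classical
  -- Step 1: minimality data, or `N = 3`
  have hminN : (∀ I : Finset (Fin N), I.card ≤ p + 3 → I.Nonempty →
      finrank ℝ ↥(I.inf E) + ∑ i ∈ I, (n - finrank ℝ ↥(E i)) = n) ∨ N = 3 := by
    rcases hE with ha | hb | hc
    · left
      intro I _ hne
      have h1 := ha I hne
      have h2 : I.inf E = ⨅ i ∈ I, E i := Finset.inf_eq_iInf I E
      have h3 : finrank ℝ ↥(I.inf E) ≤ n := by
        have := Submodule.finrank_le (I.inf E)
        rwa [Module.finrank_fin_fun ℝ] at this
      rw [Module.finrank_fin_fun ℝ, ← h2] at h1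
      omega
    · left
      intro I hIcard hne
      have h1 := hb I hIcard I.attach (by rwa [Finset.attach_nonempty_iff])
      have h2 : (⨅ x ∈ I.attach, E ↑x) = ⨅ i ∈ I, E i := by
        apply le_antisymm
        · exact le_iInf₂ fun i hi => iInf₂_le ⟨i, hi⟩ (Finset.mem_attach _ _)
        · exact le_iInf₂ fun x _ => biInf_le E x.2
      have h3 : ∑ x ∈ I.attach, (n - finrank ℝ ↥(E ↑x)) = ∑ i ∈ I, (n - finrank ℝ ↥(E i)) :=
        Finset.sum_attach I (fun i => n - finrank ℝ ↥(E i))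
      have h4 : finrank ℝ ↥(I.inf E) ≤ n := by
        have := Submodule.finrank_le (I.inf E)
        rwa [Module.finrank_fin_fun ℝ] at this
      have h5 : I.inf E = ⨅ i ∈ I, E i := Finset.inf_eq_iInf I E
      rw [Module.finrank_fin_fun ℝ] at h1
      rw [h2] at h1
      rw [h3] at h1
      rw [← h5] at h1
      omega
    · right; exact hc
  -- Step 2: lift the cocycle to global forms
  have hlift : ∀ i j : Fin N, ∃ ω : AlternatingMap ℝ (Fin n → ℝ) ℝ (Fin p),
      ∀ (v : Fin p → (Fin n → ℝ)) (hv : ∀ l, v l ∈ E i ⊓ E j),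
        ω v = R i j (fun l => ⟨v l, hv l⟩) := by
    intro i j
    obtain ⟨B, hB⟩ := Submodule.exists_isCompl (E i ⊓ E j)
    refine ⟨(R i j).compLinearMap (Submodule.projectionOnto _ B hB), ?_⟩
    intro v hv
    simp only [AlternatingMap.compLinearMap_apply]
    congr 1
    funext l
    exact Submodule.linearProjOfIsCompl_apply_left hB ⟨v l, hv l⟩
  choose ω hω using hlift
  -- Step 3: cocycle identity for the lifts
  have hco : ∀ i j k : Fin N, i < j → j < k →
      AuxVOn (ω i j - ω i k + ω j k) (E i ⊓ E j ⊓ E k) := by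
    intro i j k hij hjk v hv
    have h1 : ∀ l, v l ∈ E i ⊓ E j := fun l => (hv l).1
    have h2 : ∀ l, v l ∈ E i ⊓ E k := fun l => ⟨(hv l).1.1, (hv l).2⟩
    have h3 : ∀ l, v l ∈ E j ⊓ E k := fun l => ⟨(hv l).1.2, (hv l).2⟩
    have key := congrFun (congrArg DFunLike.coe (hR i j k hij hjk))
      (fun l => (⟨v l, hv l⟩ : ↥(E i ⊓ E j ⊓ E k)))
    simp only [AlternatingMap.sub_apply, AlternatingMap.add_apply,
      AlternatingMap.compLinearMap_apply, AlternatingMap.zero_apply] at key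
    have e1 : (fun l => Submodule.inclusion
        (inf_le_left : E i ⊓ E j ⊓ E k ≤ E i ⊓ E j) ⟨v l, hv l⟩) =
        (fun l => (⟨v l, h1 l⟩ : ↥(E i ⊓ E j))) := funext fun l => Subtype.ext rfl
    have e2 : (fun l => Submodule.inclusion
        (le_inf (le_trans inf_le_left inf_le_left) inf_le_right :
          E i ⊓ E j ⊓ E k ≤ E i ⊓ E k) ⟨v l, hv l⟩) =
        (fun l => (⟨v l, h2 l⟩ : ↥(E i ⊓ E k))) := funext fun l => Subtype.ext rfl
    have e3 : (fun l => Submodule.inclusion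
        (le_inf (le_trans inf_le_left inf_le_right) inf_le_right :
          E i ⊓ E j ⊓ E k ≤ E j ⊓ E k) ⟨v l, hv l⟩) =
        (fun l => (⟨v l, h3 l⟩ : ↥(E j ⊓ E k))) := funext fun l => Subtype.ext rfl
    rw [e1, e2, e3] at key
    simp only [AlternatingMap.sub_apply, AlternatingMap.add_apply]
    rw [hω i j v h1, hω i k v h2, hω j k v h3]
    exact key
  -- Step 4: the main double induction
  have main : ∀ t : ℕ, t ≤ N → ∃ lam : Fin N → AlternatingMap ℝ (Fin n → ℝ) ℝ (Fin p),
      ∀ i j : Fin N, i < j → (j : ℕ) < t →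
        AuxVOn (ω i j - lam j + lam i) (E i ⊓ E j) := by
    intro t
    induction t with
    | zero => exact fun _ => ⟨0, fun i j _ h => absurd h (by omega)⟩
    | succ t ih =>
      intro ht
      obtain ⟨lam, hlam⟩ := ih (by omega)
      have htN : t < N := ht
      set T : Fin N := ⟨t, htN⟩ with hTdef
      -- inner induction: Helly-type argument
      have inner : ∀ k : ℕ, k ≤ t → ∃ y : AlternatingMap ℝ (Fin n → ℝ) ℝ (Fin p),
          ∀ i : Fin N, (i : ℕ) < k → AuxVOn (ω i T + lam i - y) (E i ⊓ E T) := by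
        intro k
        induction k with
        | zero => exact fun _ => ⟨0, fun i h => absurd h (by omega)⟩
        | succ k ihk =>
          intro hk1
          have hkt : k < t := hk1
          obtain ⟨y, hy⟩ := ihk (by omega)
          have hkN : k < N := by omega
          set K : Fin N := ⟨k, hkN⟩ with hKdef
          have hKT : K < T := by rw [Fin.lt_def]; exact hkt
          have hξ : ∀ i : Fin N, (i : ℕ) < k →
              AuxVOn (ω K T + lam K - y) (E i ⊓ E K ⊓ E T) := by
            intro i hik v hv
            have hiK : i < K := by rw [Fin.lt_def]; exact hik
            have hX := hco i K T hiK hKT v hv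
            have hY := hlam i K hiK (by simpa using hkt) v (fun l => (hv l).1)
            have hZ := hy i hik v (fun l => ⟨(hv l).1.1, (hv l).2⟩)
            simp only [AlternatingMap.sub_apply, AlternatingMap.add_apply] at hX hY hZ ⊢
            linarith
          rcases Nat.eq_zero_or_pos k with rfl | hkpos
          · -- first step: no compatibility needed
            refine ⟨ω K T + lam K, ?_⟩
            intro i hik
            have hiK : i = K := by
              apply Fin.ext
              simp only [hKdef]
              omega
            subst hiK
            intro v hv
            simp only [AlternatingMap.sub_apply, AlternatingMap.add_apply]
            ring
          rcases eq_or_lt_of_le (Nat.succ_le_of_lt hkpos) with hk1' | hk2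
          · -- k = 1 : a single compatibility, two-subspace splitting suffices
            set i0 : Fin N := ⟨0, by omega⟩ with hi0def
            have h0 : AuxVOn (ω K T + lam K - y) (E i0 ⊓ E K ⊓ E T) :=
              hξ i0 (by simp [hi0def]; omega)
            have h0' : AuxVOn (ω K T + lam K - y) ((E i0 ⊓ E T) ⊓ (E K ⊓ E T)) :=
              h0.mono (fun x hx => ⟨⟨hx.1.1, hx.2.1⟩, hx.1.2⟩)
            obtain ⟨α, β, hαβ, hα, hβ⟩ := aux_pair_decomp h0'
            refine ⟨y + α, ?_⟩
            intro i hik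
            rcases (by omega : (i : ℕ) = 0 ∨ (i : ℕ) = k) with h | h
            · have : i = i0 := by apply Fin.ext; simpa [hi0def] using h
              subst this
              intro v hv
              have ha1 := hy i0 (by simp [hi0def]; omega) v hv
              have ha2 := hα v hv
              simp only [AlternatingMap.sub_apply, AlternatingMap.add_apply] at ha1 ha2 ⊢
              linarith
            · have : i = K := by apply Fin.ext; simpa [hKdef] using h
              subst this
              intro v hv
              have hb1 := hβ v hv
              have hb2 : (ω K T + lam K - y) v = α v + β v := by
                rw [hαβ]; simp only [AlternatingMap.add_apply]
              simp only [AlternatingMap.sub_apply, AlternatingMap.add_apply] at hb1 hb2 ⊢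
              linarith
          · -- k ≥ 2 : use minimality
            rcases hminN with hmin | hN3
            swap
            · exfalso
              have := T.isLt
              omega
            have hkN' : k ≤ N := le_of_lt hkN
            set S : Finset (Fin N) :=
              Finset.image (fun m : Fin k => Fin.castLE hkN' m) Finset.univ with hSdef
            have hSmem : ∀ i : Fin N, i ∈ S ↔ (i : ℕ) < k := by
              intro i
              simp only [hSdef, Finset.mem_image, Finset.mem_univ, true_and]
              constructor
              · rintro ⟨m, rfl⟩; exact m.isLt
              · intro h; exact ⟨⟨(i : ℕ), h⟩, Fin.ext rfl⟩
            have hScard : S.card = k := by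
              rw [hSdef, Finset.card_image_of_injective _ (Fin.castLE_injective hkN'),
                Finset.card_univ, Fintype.card_fin]
            obtain ⟨S', hS'sub, hS'card⟩ : ∃ S' ⊆ S, S'.card = min k (p + 1) :=
              Finset.exists_subset_card_eq (by rw [hScard]; exact Nat.min_le_left _ _)
            have hS'lt : ∀ i ∈ S', (i : ℕ) < k := fun i hi => (hSmem i).mp (hS'sub hi)
            have hKT' : K ≠ T := by
              intro h
              have := congrArg Fin.val h
              simp only [hKdef, hTdef] at this
              omega
            set G : Finset (Fin N) := insert K (insert T S') with hGdef
            have hKG : K ∈ G := Finset.mem_insert_self _ _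
            have hTG : T ∈ G := Finset.mem_insert_of_mem (Finset.mem_insert_self _ _)
            have hGcard : G.card ≤ p + 3 := by
              have c1 : G.card ≤ (insert T S').card + 1 := Finset.card_insert_le _ _
              have c2 : (insert T S').card ≤ S'.card + 1 := Finset.card_insert_le _ _
              have c3 : S'.card ≤ p + 1 := by rw [hS'card]; exact Nat.min_le_right _ _
              omega
            have hGmin : ∀ I ⊆ G, I.Nonempty →
                finrank ℝ ↥(I.inf E) + ∑ i ∈ I, (n - finrank ℝ ↥(E i)) = n :=
              fun I hIG hne => hmin I (le_trans (Finset.card_le_card hIG) hGcard) hne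
            obtain ⟨π, hπF, hπran, hπE⟩ := aux_exists_triple_proj E G K T hKG hTG hKT' hGmin
            have hπS' : ∀ i ∈ S', ∀ x ∈ E i, π x ∈ E i := by
              intro i hi x hx
              have hiK : i ≠ K := by
                intro h
                have := hS'lt i hi
                rw [h] at this
                simp only [hKdef] at this
                omega
              have hiT : i ≠ T := by
                intro h
                have := hS'lt i hi
                rw [h] at this
                simp only [hTdef] at this
                omega
              exact hπE i (by simp [hGdef, hi]) hiK hiT x hx
            set b : AlternatingMap ℝ (Fin n → ℝ) ℝ (Fin p) :=
              (ω K T + lam K - y).compLinearMap π with hbdef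
            have hbvan : ∀ i ∈ S', AuxVOn b (E i) := by
              intro i hi v hv
              simp only [hbdef, AlternatingMap.compLinearMap_apply]
              apply hξ i (hS'lt i hi)
              intro l
              exact ⟨⟨(hπS' i hi (v l) (hv l) : π (v l) ∈ E i), (hπran (v l)).1⟩,
                (hπran (v l)).2⟩
            have hbonF : ∀ (v : Fin p → (Fin n → ℝ)), (∀ l, v l ∈ E K ⊓ E T) →
                b v = (ω K T + lam K - y) v := by
              intro v hv
              simp only [hbdef, AlternatingMap.compLinearMap_apply]
              congr 1
              funext l
              exact hπF (v l) (hv l)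
            by_cases hkp : k ≤ p + 1
            · -- here S' = S
              have hS'S : S' = S := Finset.eq_of_subset_of_card_le hS'sub
                (by rw [hScard, hS'card]; omega)
              refine ⟨y + b, ?_⟩
              intro i hik
              rcases (by omega : (i : ℕ) < k ∨ (i : ℕ) = k) with h | h
              · intro v hv
                have ha1 := hy i h v hv
                have ha2 : b v = 0 := by
                  simp only [hbdef, AlternatingMap.compLinearMap_apply]
                  apply hξ i h
                  intro l
                  have hiS' : i ∈ S' := by rw [hS'S, hSmem]; exact h
                  exact ⟨⟨(hπS' i hiS' (v l) (hv l).1 : π (v l) ∈ E i), (hπran (v l)).1⟩,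
                    (hπran (v l)).2⟩
                simp only [AlternatingMap.sub_apply, AlternatingMap.add_apply] at ha1 ha2 ⊢
                linarith
              · have : i = K := by apply Fin.ext; simpa [hKdef] using h
                subst this
                intro v hv
                have hb1 := hbonF v hv
                simp only [AlternatingMap.sub_apply, AlternatingMap.add_apply] at hb1 ⊢
                linarith
            · -- here S' has p + 1 elements, use the vanishing lemma
              have hS'card' : S'.card = p + 1 := by rw [hS'card]; omega
              have hS'G : S' ⊆ G := fun x hx =>
                Finset.mem_insert_of_mem (Finset.mem_insert_of_mem hx)
              have hb0 : b = 0 := aux_vanish_of_vanish_all hp E S' hS'card'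
                (fun I hIS hne => hGmin I (le_trans hIS hS'G) hne) b hbvan
              refine ⟨y, ?_⟩
              intro i hik
              rcases (by omega : (i : ℕ) < k ∨ (i : ℕ) = k) with h | h
              · exact hy i h
              · have : i = K := by apply Fin.ext; simpa [hKdef] using h
                subst this
                intro v hv
                have hb1 := hbonF v hv
                rw [hb0] at hb1
                simp only [AlternatingMap.zero_apply] at hb1
                exact hb1.symm
      obtain ⟨y, hy⟩ := inner t le_rfl
      refine ⟨Function.update lam T y, ?_⟩
      intro i j hij hjt
      rcases (by omega : (j : ℕ) < t ∨ (j : ℕ) = t) with h | h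
      · have hjT : j ≠ T := by
          intro hEq
          rw [hEq] at h
          simp only [hTdef] at h
          omega
        have hiT : i ≠ T := by
          intro hEq
          have : (i : ℕ) < (j : ℕ) := hij
          rw [hEq] at this
          simp only [hTdef] at this
          omega
        rw [Function.update_of_ne hjT, Function.update_of_ne hiT]
        exact hlam i j hij h
      · have hjT : j = T := by apply Fin.ext; simpa [hTdef] using h
        subst hjT
        have hiT : i ≠ T := by
          intro hEq
          have h6 : (i : ℕ) < (T : ℕ) := hij
          rw [hEq] at h6
          omega
        rw [Function.update_self, Function.update_of_ne hiT]
        intro v hv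
        have := hy i (by have : (i : ℕ) < (T : ℕ) := hij; simpa [hTdef] using this) v hv
        simp only [AlternatingMap.sub_apply, AlternatingMap.add_apply] at this ⊢
        linarith
  obtain ⟨lam, hlam⟩ := main N le_rfl
  refine ⟨fun i => (lam i).compLinearMap (E i).subtype, ?_⟩
  intro i j hij
  ext v
  have hv : ∀ l, (v l : Fin n → ℝ) ∈ E i ⊓ E j := fun l => (v l).2
  have h1 := hlam i j hij j.isLt (fun l => ↑(v l)) hv
  have h2 := hω i j (fun l => ↑(v l)) hv
  have h3 : (fun l => (⟨↑(v l), hv l⟩ : ↥(E i ⊓ E j))) = v := funext fun l => Subtype.ext rfl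
  rw [h3] at h2
  simp only [AlternatingMap.sub_apply, AlternatingMap.add_apply,
    AlternatingMap.compLinearMap_apply] at h1 ⊢
  have h4 : (fun l => ((E j).subtype (Submodule.inclusion
      (inf_le_right : E i ⊓ E j ≤ E j) (v l)))) = (fun l => (↑(v l) : Fin n → ℝ)) :=
    funext fun l => rfl
  have h5 : (fun l => ((E i).subtype (Submodule.inclusion
      (inf_le_left : E i ⊓ E j ≤ E i) (v l)))) = (fun l => (↑(v l) : Fin n → ℝ)) :=
    funext fun l => rfl
  rw [h4, h5]
  rw [← h2]
  linarith
end

section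
/- Let W be a finite-dimensional real vector space and let {E_i}_{i=1}^N be a semi-generic arrangement of linear subspaces of ℝ^n. Let f_i : S(E_i) → W be smooth maps (smooth as maps on the submanifold S(E_i) of S^{n-1}) such that f_i = f_j on S(E_i ∩ E_j) for all 1 ≤ i < j ≤ N. Then there exists a smooth map f : S^{n-1} → W such that f restricted to S(E_i) equals f_i for all 1 ≤ i ≤ N. -/
open Module Submodule

/-- An arrangement of subspaces of `V` is *semi-generic* if, whenever a nonempty subfamily
`{E i}_{i ∈ I}` has nonzero intersection, it is minimally intersecting within its span
`Σ_{i ∈ I} E i`: for every nonempty `J ⊆ I` the codimension of `⋂ j ∈ J, E j` relative to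
`Σ_{i ∈ I} E i` equals the sum over `j ∈ J` of the codimensions of `E j` relative to
`Σ_{i ∈ I} E i`. -/
def IsSemiGeneric {V : Type*} [AddCommGroup V] [Module ℝ V]
    {ι : Type*} (E : ι → Submodule ℝ V) : Prop :=
  ∀ I : Finset ι, I.Nonempty → (⨅ i ∈ I, E i) ≠ ⊥ →
    ∀ J ⊆ I, J.Nonempty →
      finrank ℝ ↥(⨆ i ∈ I, E i) - finrank ℝ ↥(⨅ j ∈ J, E j) =
        ∑ j ∈ J, (finrank ℝ ↥(⨆ i ∈ I, E i) - finrank ℝ ↥(E j))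

lemma lemA {n N : ℕ} (E : Fin N → Submodule ℝ (EuclideanSpace ℝ (Fin n)))
    (hE : IsSemiGeneric E) (I : Finset (Fin N)) (k : Fin N) (hk : k ∈ I)
    (hne : (⨅ i ∈ I, E i) ≠ ⊥) :
    ∃ P : EuclideanSpace ℝ (Fin n) →ₗ[ℝ] EuclideanSpace ℝ (Fin n),
      (∀ v ∈ E k, P v = v) ∧ (∀ v, P v ∈ E k) ∧ ∀ i ∈ I, ∀ v ∈ E i, P v ∈ E i := by
  classical
  set C : Submodule ℝ (EuclideanSpace ℝ (Fin n)) := ⨅ i ∈ I, E i with hCdef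
  set F : Submodule ℝ (EuclideanSpace ℝ (Fin n)) := ⨅ i ∈ I.erase k, E i with hFdef
  have hCk : C = E k ⊓ F := by
    rw [hCdef, hFdef, ← Finset.iInf_insert, Finset.insert_erase hk]
  have hCF : C ≤ F := hCk ▸ inf_le_right
  obtain ⟨D', hD'⟩ := (C.comap F.subtype).exists_isCompl
  set D : Submodule ℝ (EuclideanSpace ℝ (Fin n)) := D'.map F.subtype with hDdef
  have hDF : D ≤ F := map_subtype_le _ _
  have hEkD : E k ⊓ D = ⊥ := by
    rw [eq_bot_iff]
    rintro v ⟨hvk, hvD⟩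
    obtain ⟨w, hw, rfl⟩ := hvD
    have hwC : (w : EuclideanSpace ℝ (Fin n)) ∈ C := hCk ▸ ⟨hvk, w.2⟩
    have : w ∈ (C.comap F.subtype) ⊓ D' := ⟨hwC, hw⟩
    rw [hD'.inf_eq_bot] at this
    simpa using this
  obtain ⟨U, hU⟩ := (E k ⊔ D).exists_isCompl
  have hT : IsCompl (E k) (D ⊔ U) := by
    constructor
    · rw [disjoint_iff, eq_bot_iff]
      rintro v ⟨hvk, hvDU⟩
      obtain ⟨d, hd, u, hu, rfl⟩ := mem_sup.mp hvDU
      have hu' : u ∈ (E k ⊔ D) ⊓ U :=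
        ⟨by
          have : u = (d + u) - d := by abel
          rw [this]
          exact sub_mem (mem_sup_left hvk) (mem_sup_right hd), hu⟩
      rw [hU.inf_eq_bot] at hu'
      rw [hu', add_zero] at hvk ⊢
      have : d ∈ E k ⊓ D := ⟨hvk, hd⟩
      rw [hEkD] at this
      simpa using this
    · rw [codisjoint_iff, ← sup_assoc]
      exact hU.sup_eq_top
  refine ⟨(E k).subtype.comp (linearProjOfIsCompl (E k) (D ⊔ U) hT), ?_, ?_, ?_⟩
  · intro v hv
    exact congrArg Subtype.val (linearProjOfIsCompl_apply_left hT ⟨v, hv⟩)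
  · intro v
    exact ((linearProjOfIsCompl (E k) (D ⊔ U) hT) v).2
  · intro i hi v hv
    by_cases hik : i = k
    · subst hik
      simp [linearProjOfIsCompl_apply_left hT ⟨v, hv⟩, hv]
    · have hie : i ∈ I.erase k := Finset.mem_erase.mpr ⟨hik, hi⟩
      have hFEi : F ≤ E i := iInf₂_le i hie
      have key : (E i ⊓ E k) ⊔ D = E i := by
        apply Submodule.eq_of_le_of_finrank_le
          (sup_le inf_le_left (hDF.trans hFEi))
        -- dimension count
        have hIne : I.Nonempty := ⟨k, hk⟩
        have e1 := hE I hIne hne {i, k}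
          (by
            intro j hj
            rcases Finset.mem_insert.mp hj with rfl | hj
            · exact hi
            · rw [Finset.mem_singleton.mp hj]; exact hk)
          ⟨i, Finset.mem_insert_self _ _⟩
        have e2 := hE I hIne hne I le_rfl hIne
        have e3 := hE I hIne hne (I.erase k) (Finset.erase_subset _ _) ⟨i, hie⟩
        rw [show (⨅ j ∈ ({i, k} : Finset (Fin N)), E j) = E i ⊓ E k by
            rw [Finset.iInf_insert, Finset.iInf_singleton],
          Finset.sum_insert (by simpa using hik), Finset.sum_singleton] at e1
        set s := finrank ℝ ↥(⨆ i ∈ I, E i)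
        have esum : (∑ j ∈ I.erase k, (s - finrank ℝ ↥(E j))) + (s - finrank ℝ ↥(E k)) =
            ∑ j ∈ I, (s - finrank ℝ ↥(E j)) := Finset.sum_erase_add I _ hk
        set ai := finrank ℝ ↥(E i)
        set ak := finrank ℝ ↥(E k)
        set x := finrank ℝ ↥(E i ⊓ E k)
        set c := finrank ℝ ↥C
        set fF := finrank ℝ ↥F
        set dD := finrank ℝ ↥D
        -- identities
        have hai : ai ≤ s := Submodule.finrank_mono (le_iSup₂ (f := fun j _ => E j) i hi)
        have hak : ak ≤ s := Submodule.finrank_mono (le_iSup₂ (f := fun j _ => E j) k hk)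
        have hfF : fF ≤ s :=
          Submodule.finrank_mono (hFEi.trans (le_iSup₂ (f := fun j _ => E j) i hi))
        have hcx : c ≤ x :=
          Submodule.finrank_mono (le_inf (iInf₂_le i hi) (iInf₂_le k hk))
        have hcfF : c ≤ fF := Submodule.finrank_mono hCF
        have hxai : x ≤ ai := Submodule.finrank_mono inf_le_left
        have hxak : x ≤ ak := Submodule.finrank_mono inf_le_right
        have hdd : c + dD = fF := by
          have h1 := Submodule.finrank_add_eq_of_isCompl hD'
          have h2 : finrank ℝ ↥D = finrank ℝ ↥D' := Submodule.finrank_map_subtype_eq F D'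
          have h3 : finrank ℝ ↥(C.comap F.subtype) = finrank ℝ ↥C :=
            (Submodule.comapSubtypeEquivOfLe hCF).finrank_eq
          show finrank ℝ ↥C + finrank ℝ ↥D = finrank ℝ ↥F
          rw [h2, ← h3]
          exact h1
        have hsup := Submodule.finrank_sup_add_finrank_inf_eq (E i ⊓ E k) D
        have hinfbot : (E i ⊓ E k) ⊓ D = ⊥ := by
          rw [eq_bot_iff, ← hEkD]
          exact inf_le_inf_right D inf_le_right
        rw [hinfbot, finrank_bot] at hsup
        omega
      rw [← key] at hv
      obtain ⟨a, ha, d, hd, rfl⟩ := mem_sup.mp hv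
      have hPa : ((E k).subtype.comp (linearProjOfIsCompl (E k) (D ⊔ U) hT)) a = a := by
        exact congrArg Subtype.val (linearProjOfIsCompl_apply_left hT ⟨a, ha.2⟩)
      have hPd : ((E k).subtype.comp (linearProjOfIsCompl (E k) (D ⊔ U) hT)) d = 0 := by
        simp [show linearProjOfIsCompl (E k) (D ⊔ U) hT d = 0 from
          linearProjOfIsCompl_apply_right' hT (mem_sup_left hd)]
      rw [map_add, hPa, hPd, add_zero]
      exact ha.1

open Set Function Manifold in
lemma glueStep {W : Type*} [NormedAddCommGroup W] [NormedSpace ℝ W]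
    {n N : ℕ} (E : Fin N → Submodule ℝ (EuclideanSpace ℝ (Fin n)))
    (hE : IsSemiGeneric E)
    (g : Fin N → EuclideanSpace ℝ (Fin n) → W)
    (hg : ∀ i, ContDiff ℝ (⊤ : ℕ∞) (g i))
    (hcompat : ∀ i j, ∀ x ∈ E i ⊓ E j, ‖x‖ = 1 → g i x = g j x)
    (k : Fin N) (S : Finset (Fin N))
    (f : EuclideanSpace ℝ (Fin n) → W) (hf : ContDiff ℝ (⊤ : ℕ∞) f)
    (hfS : ∀ i ∈ S, ∀ x ∈ E i, ‖x‖ = 1 → f x = g i x) :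
    ∃ f' : EuclideanSpace ℝ (Fin n) → W, ContDiff ℝ (⊤ : ℕ∞) f' ∧
      ∀ i ∈ insert k S, ∀ x ∈ E i, ‖x‖ = 1 → f' x = g i x := by
  classical
  set h : EuclideanSpace ℝ (Fin n) → W :=
    fun v => g k (‖v‖⁻¹ • v) - f (‖v‖⁻¹ • v) with hhdef
  have hsm : ∀ v : EuclideanSpace ℝ (Fin n), v ≠ 0 → ContDiffAt ℝ (⊤ : ℕ∞) h v := by
    intro v hv
    have hr : ContDiffAt ℝ (⊤ : ℕ∞) (fun v : EuclideanSpace ℝ (Fin n) => ‖v‖⁻¹ • v) v :=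
      (((contDiffAt_norm (𝕜 := ℝ) hv).inv (norm_ne_zero_iff.mpr hv))).smul contDiffAt_id
    exact (((hg k).contDiffAt).comp v hr).sub (((hf).contDiffAt).comp v hr)
  have hunit : ∀ y : EuclideanSpace ℝ (Fin n), ‖y‖ = 1 → h y = g k y - f y := by
    intro y hy
    simp [hhdef, hy]
  have hvanish : ∀ i ∈ S, ∀ v : EuclideanSpace ℝ (Fin n),
      v ∈ E i → v ∈ E k → v ≠ 0 → h v = 0 := by
    intro i hi v hvi hvk hv0
    have hn1 : ‖(‖v‖⁻¹ • v : EuclideanSpace ℝ (Fin n))‖ = 1 := by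
      rw [norm_smul, norm_inv, norm_norm, inv_mul_cancel₀ (norm_ne_zero_iff.mpr hv0)]
    have hyi : (‖v‖⁻¹ • v : EuclideanSpace ℝ (Fin n)) ∈ E i := (E i).smul_mem _ hvi
    have hyk : (‖v‖⁻¹ • v : EuclideanSpace ℝ (Fin n)) ∈ E k := (E k).smul_mem _ hvk
    have h1 : f (‖v‖⁻¹ • v) = g i (‖v‖⁻¹ • v) := hfS i hi _ hyi hn1
    have h2 : g i (‖v‖⁻¹ • v) = g k (‖v‖⁻¹ • v) := hcompat i k _ ⟨hyi, hyk⟩ hn1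
    simp [hhdef, h1, h2]
  have hSphClosed : ∀ j : Fin N,
      IsClosed {v : EuclideanSpace ℝ (Fin n) | v ∈ E j ∧ ‖v‖ = 1} := by
    intro j
    exact ((E j).closed_of_finiteDimensional).inter
      (isClosed_eq continuous_norm continuous_const)
  -- charts
  have hcharts : ∀ x : EuclideanSpace ℝ (Fin n),
      ∃ (U : Set (EuclideanSpace ℝ (Fin n))) (Hx : EuclideanSpace ℝ (Fin n) → W),
        IsOpen U ∧ x ∈ U ∧ ContDiffOn ℝ (⊤ : ℕ∞) Hx U ∧
        (∀ v ∈ U, v ∈ E k → ‖v‖ = 1 → Hx v = h v) ∧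
        (∀ i ∈ S, ∀ v ∈ U, v ∈ E i → ‖v‖ = 1 → Hx v = 0) := by
    intro x
    by_cases hx : x ∈ E k ∧ ‖x‖ = 1
    · set I : Finset (Fin N) := Finset.univ.filter (fun j => x ∈ E j) with hIdef
      have hkI : k ∈ I := by simp [hIdef, hx.1]
      have hx0 : x ≠ 0 := by
        intro h0
        have := hx.2
        rw [h0, norm_zero] at this
        exact one_ne_zero this.symm
      have hne : (⨅ i ∈ I, E i) ≠ ⊥ := by
        rw [Submodule.ne_bot_iff]
        refine ⟨x, ?_, hx0⟩
        simp only [Submodule.mem_iInf]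
        intro j hj
        simpa [hIdef] using hj
      obtain ⟨P, hPa, hPb, hPc⟩ := lemA E hE I k hkI hne
      refine ⟨{v | P v ≠ 0} ∩
        {v | ∀ j, j ∉ I → ¬(v ∈ E j ∧ ‖v‖ = 1)}, fun v => h (P v), ?_, ?_, ?_, ?_, ?_⟩
      · apply IsOpen.inter
        · have : {v : EuclideanSpace ℝ (Fin n) | P v ≠ 0} =
              (LinearMap.toContinuousLinearMap P) ⁻¹' ({0}ᶜ) := by
            ext v; simp
          rw [this]
          exact (isOpen_compl_singleton).preimage
            (LinearMap.toContinuousLinearMap P).continuous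
        · have : {v : EuclideanSpace ℝ (Fin n) | ∀ j, j ∉ I → ¬(v ∈ E j ∧ ‖v‖ = 1)} =
              (⋃ j : Fin N, ⋃ _ : j ∉ I, {v | v ∈ E j ∧ ‖v‖ = 1})ᶜ := by
            ext v; simp
          rw [this]
          exact (isClosed_iUnion_of_finite fun j =>
            isClosed_iUnion_of_finite fun _ => hSphClosed j).isOpen_compl
      · constructor
        · have : P x = x := hPa x hx.1
          simpa [this] using hx0
        · intro j hj hmem
          exact hj (by simp [hIdef, hmem.1])
      · intro v hv
        exact ((hsm (P v) hv.1).comp v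
          ((LinearMap.toContinuousLinearMap P).contDiff.contDiffAt)).contDiffWithinAt
      · intro v _ hvk _
        show h (P v) = h v
        rw [hPa v hvk]
      · intro i hiS v hv hvi hv1
        have hiI : i ∈ I := by
          by_contra hiI
          exact hv.2 i hiI ⟨hvi, hv1⟩
        exact hvanish i hiS (P v) (hPc i hiI v hvi) (hPb v) hv.1
    · refine ⟨{v | v ∈ E k ∧ ‖v‖ = 1}ᶜ, 0, ?_, hx, contDiffOn_const, ?_, ?_⟩
      · exact (hSphClosed k).isOpen_compl
      · intro v hv hvk hv1; exact absurd ⟨hvk, hv1⟩ hv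
      · intro i _ v _ _ _; rfl
  choose U Hx hUopen hxU hHsm hA hB using hcharts
  obtain ⟨ρ, hρ⟩ := SmoothPartitionOfUnity.exists_isSubordinate
    (I := 𝓘(ℝ, EuclideanSpace ℝ (Fin n))) isClosed_univ U hUopen
    (fun v _ => Set.mem_iUnion.2 ⟨v, hxU v⟩)
  set H : EuclideanSpace ℝ (Fin n) → W := fun v => ∑ᶠ x, ρ x v • Hx x v with hHdef
  have hHsm' : ContDiff ℝ (⊤ : ℕ∞) H := by
    have := hρ.contMDiff_finsum_smul (n := (⊤ : ℕ∞)) hUopen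
      (fun x => (hHsm x).contMDiffOn)
    exact this.contDiff
  refine ⟨fun v => f v + H v, hf.add hHsm', ?_⟩
  intro i hi y hyEi hy1
  by_cases hyk : y ∈ E k
  · have hterm : ∀ x, ρ x y • Hx x y = ρ x y • h y := by
      intro x
      rcases eq_or_ne (ρ x y) 0 with h0 | h0
      · rw [h0, zero_smul, zero_smul]
      · have hyU : y ∈ U x := hρ x (subset_tsupport _ (mem_support.mpr h0))
        rw [hA x y hyU hyk hy1]
    have hy' : H y = h y := by
      rw [hHdef]
      calc (∑ᶠ x, ρ x y • Hx x y) = ∑ᶠ x, ρ x y • h y := finsum_congr hterm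
        _ = (∑ᶠ x, ρ x y) • h y := (finsum_smul _ _).symm
        _ = h y := by rw [ρ.sum_eq_one (Set.mem_univ y), one_smul]
    rw [hunit y hy1] at hy'
    show f y + H y = g i y
    rcases Finset.mem_insert.mp hi with rfl | hiS
    · rw [hy']; abel
    · have hgik : g k y = g i y := (hcompat i k y ⟨hyEi, hyk⟩ hy1).symm
      rw [hy', ← hgik]; abel
  · have hiS : i ∈ S := by
      rcases Finset.mem_insert.mp hi with rfl | hiS
      · exact absurd hyEi hyk
      · exact hiS
    have hy' : H y = 0 := by
      show (∑ᶠ x, ρ x y • Hx x y) = 0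
      have hterm : ∀ x, ρ x y • Hx x y = 0 := by
        intro x
        rcases eq_or_ne (ρ x y) 0 with h0 | h0
        · rw [h0, zero_smul]
        · have hyU : y ∈ U x := hρ x (subset_tsupport _ (mem_support.mpr h0))
          rw [hB x i hiS y hyU hyEi hy1, smul_zero]
      rw [finsum_congr hterm, finsum_zero]
    show f y + H y = g i y
    rw [hy', add_zero]
    exact hfS i hiS y hyEi hy1

/-- let `W` be a finite-dimensional real vector space, `{E i}` a semi-generic
arrangement of subspaces of `ℝ^n`, and let smooth maps `f i : S(E i) → W` be given which agree
on the unit spheres of the pairwise intersections.  (A smooth map on the compact submanifold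
`S(E)` of `S^{n-1}` is encoded, equivalently, as the restriction of a smooth map `g i` defined
on the ambient space.)  Then there is a smooth map `f` on `S^{n-1}` (again encoded by an
ambient smooth map) restricting to `f i` on each `S(E i)`. -/
theorem exists_smooth_extension_spheres
    {W : Type*} [NormedAddCommGroup W] [NormedSpace ℝ W] [FiniteDimensional ℝ W]
    {n N : ℕ} (E : Fin N → Submodule ℝ (EuclideanSpace ℝ (Fin n)))
    (hE : IsSemiGeneric E)
    (g : Fin N → EuclideanSpace ℝ (Fin n) → W)
    (hg : ∀ i, ContDiff ℝ (⊤ : ℕ∞) (g i))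
    (hcompat : ∀ i j, ∀ x ∈ E i ⊓ E j, ‖x‖ = 1 → g i x = g j x) :
    ∃ f : EuclideanSpace ℝ (Fin n) → W,
      ContDiff ℝ (⊤ : ℕ∞) f ∧ ∀ i, ∀ x ∈ E i, ‖x‖ = 1 → f x = g i x := by
  classical
  have main : ∀ S : Finset (Fin N), ∃ f : EuclideanSpace ℝ (Fin n) → W,
      ContDiff ℝ (⊤ : ℕ∞) f ∧ ∀ i ∈ S, ∀ x ∈ E i, ‖x‖ = 1 → f x = g i x := by
    intro S
    induction S using Finset.induction_on with
    | empty => exact ⟨0, contDiff_const, by simp⟩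
    | insert _ _ hk ih =>
        obtain ⟨f, hf, hfS⟩ := ih
        exact glueStep E hE g hg hcompat _ _ f hf hfS
  obtain ⟨f, hf, hfS⟩ := main Finset.univ
  exact ⟨f, hf, fun i => hfS i (Finset.mem_univ i)⟩
end

section
/- Let {E_i}_{i=1}^N be a semi-generic arrangement of linear subspaces of ℝ^n and let s, t ≥ 0. For each i, let g_i be a smooth section over S(E_i) of the bundle with fiber ⋀^s (T_ξ S(E_i))^* ⊗ ⋀^t E_i^* over ξ ∈ S(E_i). Assume the sections are pairwise compatible: res_{E_i ∩ E_j} g_i = res_{E_i ∩ E_j} g_j for all i, j. Then there exists a smooth section f over S^{n-1} of the bundle with fiber ⋀^s (T_ξ S^{n-1})^* ⊗ ⋀^t (ℝ^n)^* such that res_{E_i} f = g_i for all 1 ≤ i ≤ N. -/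
open Module Submodule

/-- Restriction (pullback) of alternating `t`-forms along a linear map, as a linear map. -/
def restrictForm (t : ℕ) {V W : Type*} [AddCommGroup V] [Module ℝ V]
    [AddCommGroup W] [Module ℝ W] (f : W →ₗ[ℝ] V) :
    AlternatingMap ℝ V ℝ (Fin t) →ₗ[ℝ] AlternatingMap ℝ W ℝ (Fin t) where
  toFun ω := ω.compLinearMap f
  map_add' ω₁ ω₂ := AlternatingMap.add_compLinearMap ω₁ ω₂ f
  map_smul' c ω := by ext v; simp

/-- The tangent space at `ξ` to the unit sphere of a subspace `E` of Euclidean space, namely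
`{v ∈ E : ⟨v, ξ⟩ = 0}`. -/
noncomputable def sphereTangent {n : ℕ} (E : Submodule ℝ (EuclideanSpace ℝ (Fin n)))
    (ξ : EuclideanSpace ℝ (Fin n)) : Submodule ℝ (EuclideanSpace ℝ (Fin n)) :=
  E ⊓ (ℝ ∙ ξ)ᗮ

/-- Restriction of an ambient (`⋀^t`-form–valued) alternating `s`-form at a point of the sphere
of `E`: the `s` arguments are restricted to the tangent space `T` of the sphere of `E` and the
values are restricted to `⋀^t E^*`. -/
noncomputable def resSection {n : ℕ} (s t : ℕ) (T E : Submodule ℝ (EuclideanSpace ℝ (Fin n)))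
    (A : AlternatingMap ℝ (EuclideanSpace ℝ (Fin n))
      (AlternatingMap ℝ (EuclideanSpace ℝ (Fin n)) ℝ (Fin t)) (Fin s)) :
    AlternatingMap ℝ ↥T (AlternatingMap ℝ ↥E ℝ (Fin t)) (Fin s) :=
  ((restrictForm t E.subtype).compAlternatingMap A).compLinearMap T.subtype


open scoped RealInnerProductSpace Manifold

section Auxiliary

variable {n N s t : ℕ}

local notation "𝕍" => EuclideanSpace ℝ (Fin n)
local notation "Amb" => AlternatingMap ℝ (EuclideanSpace ℝ (Fin n))
      (AlternatingMap ℝ (EuclideanSpace ℝ (Fin n)) ℝ (Fin t)) (Fin s)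
local notation "𝕏" => (EuclideanSpace ℝ (Fin n)) × (Fin s → EuclideanSpace ℝ (Fin n))
      × (Fin t → EuclideanSpace ℝ (Fin n))

private lemma alt_sum_apply₂ {α : Type*} (S : Finset α) (F : α → Amb)
    (v : Fin s → 𝕍) (w : Fin t → 𝕍) :
    (∑ a ∈ S, F a) v w = ∑ a ∈ S, F a v w := by
  induction S using Finset.cons_induction with
  | empty => simp
  | cons a S ha ih => simp [Finset.sum_cons, ih]

private lemma resSection_apply' (T E : Submodule ℝ 𝕍) (A : Amb)
    (v : Fin s → ↥T) (w : Fin t → ↥E) :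
    resSection s t T E A v w = A (fun a => (v a : 𝕍)) (fun b => (w b : 𝕍)) := rfl

private lemma resSection_congr {T E : Submodule ℝ 𝕍} {A B : Amb}
    (h : ∀ (v : Fin s → 𝕍) (w : Fin t → 𝕍),
      (∀ a, v a ∈ T) → (∀ b, w b ∈ E) → A v w = B v w) :
    resSection s t T E A = resSection s t T E B := by
  ext v w
  exact h (fun a => (v a : 𝕍)) (fun b => (w b : 𝕍)) (fun a => (v a).2) (fun b => (w b).2)

private lemma resSection_eq_apply {T E : Submodule ℝ 𝕍} {A B : Amb}
    (h : resSection s t T E A = resSection s t T E B)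
    (v : Fin s → 𝕍) (w : Fin t → 𝕍) (hv : ∀ a, v a ∈ T) (hw : ∀ b, w b ∈ E) :
    A v w = B v w := by
  have h2 := congrArg (fun F : AlternatingMap ℝ ↥T (AlternatingMap ℝ ↥E ℝ (Fin t)) (Fin s) =>
    F (fun a => ⟨v a, hv a⟩) (fun b => ⟨w b, hw b⟩)) h
  simpa [resSection_apply'] using h2

private lemma mem_sphereTangent {E : Submodule ℝ 𝕍} {ξ x : 𝕍}
    (hx : x ∈ E) (hinner : ⟪ξ, x⟫ = 0) : x ∈ sphereTangent E ξ :=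
  Submodule.mem_inf.2 ⟨hx, Submodule.mem_orthogonal_singleton_iff_inner_right.2 hinner⟩

private lemma sphereTangent_mem {E : Submodule ℝ 𝕍} {ξ x : 𝕍}
    (hx : x ∈ sphereTangent E ξ) : x ∈ E ∧ ⟪ξ, x⟫ = 0 :=
  ⟨(Submodule.mem_inf.1 hx).1,
    Submodule.mem_orthogonal_singleton_iff_inner_right.1 (Submodule.mem_inf.1 hx).2⟩

private lemma span_range_coe_finBasis (p : Submodule ℝ 𝕍) :
    span ℝ (Set.range (fun k => ((Module.finBasis ℝ ↥p k : ↥p) : 𝕍))) = p := by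
  have : (fun k => ((Module.finBasis ℝ ↥p k : ↥p) : 𝕍))
      = p.subtype ∘ (Module.finBasis ℝ ↥p) := rfl
  rw [this, Set.range_comp, Submodule.span_image, Basis.span_eq, Submodule.map_subtype_top]

private lemma exists_good_projections (E : Fin N → Submodule ℝ 𝕍)
    (K : Finset (Fin N)) (hK : K.Nonempty)
    (hdim : ∀ J ⊆ K, J.Nonempty →
      finrank ℝ ↥(⨆ i ∈ K, E i) - finrank ℝ ↥(⨅ j ∈ J, E j) =
        ∑ j ∈ J, (finrank ℝ ↥(⨆ i ∈ K, E i) - finrank ℝ ↥(E j))) :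
    ∃ P : Finset (Fin N) → (𝕍 →ₗ[ℝ] 𝕍),
      (∀ S, S ⊆ K → ∀ x, ∀ j ∈ S, P S x ∈ E j) ∧
      (∀ S, S ⊆ K → ∀ x, (∀ j ∈ S, x ∈ E j) → P S x = x) ∧
      (∀ S, S ⊆ K → ∀ i ∈ K, ∀ x ∈ E i, P S x = P (insert i S) x) := by
  classical
  set U : Submodule ℝ 𝕍 := ⨆ i ∈ K, E i with hU
  set c : Fin N → ℕ := fun j => finrank ℝ ↥U - finrank ℝ ↥(E j) with hc
  have hEU : ∀ j ∈ K, E j ≤ U := fun j hj => le_iSup₂ (f := fun i _ => E i) j hj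
  have hrank : ∀ j ∈ K, finrank ℝ ↥(E j) ≤ finrank ℝ ↥U := fun j hj =>
    Submodule.finrank_mono (hEU j hj)
  -- additive form of the dimension hypothesis
  have hInf : ∀ J ⊆ K, J.Nonempty →
      finrank ℝ ↥(⨅ j ∈ J, E j) + ∑ j ∈ J, c j = finrank ℝ ↥U := by
    intro J hJK hJ
    have h1 := hdim J hJK hJ
    obtain ⟨j₀, hj₀⟩ := hJ
    have h2 : (⨅ j ∈ J, E j) ≤ U :=
      le_trans (iInf₂_le j₀ hj₀) (hEU j₀ (hJK hj₀))
    have h3 : finrank ℝ ↥(⨅ j ∈ J, E j) ≤ finrank ℝ ↥U := Submodule.finrank_mono h2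
    have h1' : finrank ℝ ↥U - finrank ℝ ↥(⨅ j ∈ J, E j) = ∑ j ∈ J, c j := h1
    omega
  set C : Submodule ℝ 𝕍 := ⨅ j ∈ K, E j with hC
  have hCle : ∀ j ∈ K, C ≤ E j := fun j hj => iInf₂_le j hj
  have hCrank : finrank ℝ ↥C + ∑ j ∈ K, c j = finrank ℝ ↥U := hInf K le_rfl hK
  set A : Fin N → Submodule ℝ 𝕍 := fun j => U ⊓ ⨅ l ∈ K.erase j, E l with hA
  have hAle : ∀ j, ∀ l ∈ K.erase j, A j ≤ E l := fun j l hl =>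
    le_trans inf_le_right (iInf₂_le l hl)
  have hArank : ∀ j ∈ K, finrank ℝ ↥(A j) + ∑ l ∈ K.erase j, c l = finrank ℝ ↥U := by
    intro j hj
    rcases (K.erase j).eq_empty_or_nonempty with he | hne
    · have : A j = U := by
        rw [hA]
        simp [he]
      rw [this, he]
      simp
    · have hsub : K.erase j ⊆ K := Finset.erase_subset _ _
      have h2 : (⨅ l ∈ K.erase j, E l) ≤ U := by
        obtain ⟨l₀, hl₀⟩ := hne
        exact le_trans (iInf₂_le l₀ hl₀) (hEU l₀ (hsub hl₀))
      have : A j = ⨅ l ∈ K.erase j, E l := inf_eq_right.2 h2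
      rw [this]
      exact hInf _ hsub hne
  have hCA : ∀ j ∈ K, C ≤ A j := by
    intro j hj
    refine le_inf ?_ (le_iInf₂ fun l hl => hCle l (Finset.mem_of_mem_erase hl))
    exact le_trans (hCle j hj) (hEU j hj)
  have hAEC : ∀ j ∈ K, A j ⊓ E j ≤ C := by
    intro j hj
    refine le_iInf₂ fun l hl => ?_
    rcases eq_or_ne l j with rfl | hne
    · exact inf_le_right
    · exact le_trans inf_le_left (hAle j l (Finset.mem_erase.2 ⟨hne, hl⟩))
  -- choose complements D j of C inside A j
  have hDex : ∀ j : Fin N, ∃ D : Submodule ℝ 𝕍,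
      j ∈ K → (D ≤ A j ∧ D ⊓ C = ⊥ ∧ D ⊔ C = A j) := by
    intro j
    by_cases hj : j ∈ K
    · obtain ⟨q, hq⟩ := Submodule.exists_isCompl (C.comap (A j).subtype)
      have hmc : Submodule.map (A j).subtype (Submodule.comap (A j).subtype C) = C := by
        rw [Submodule.map_comap_subtype]
        exact inf_eq_right.2 (hCA j hj)
      refine ⟨q.map (A j).subtype, fun _ => ⟨Submodule.map_subtype_le _ _, ?_, ?_⟩⟩
      · rw [← hmc, ← Submodule.map_inf _ (A j).injective_subtype, hq.symm.inf_eq_bot,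
          Submodule.map_bot]
      · rw [← hmc, ← Submodule.map_sup, hq.symm.sup_eq_top, Submodule.map_subtype_top]
    · exact ⟨⊥, fun h => absurd h hj⟩
  choose D hD using hDex
  have hDA : ∀ j ∈ K, D j ≤ A j := fun j hj => ((hD j) hj).1
  have hDC : ∀ j ∈ K, D j ⊓ C = ⊥ := fun j hj => ((hD j) hj).2.1
  have hDrank : ∀ j ∈ K, finrank ℝ ↥(D j) = c j := by
    intro j hj
    have h1 := Submodule.finrank_sup_add_finrank_inf_eq (D j) C
    rw [hDC j hj, ((hD j) hj).2.2] at h1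
    have h2 := hArank j hj
    have h3 : ∑ l ∈ K.erase j, c l + c j = ∑ l ∈ K, c l := Finset.sum_erase_add K c hj
    simp only [finrank_bot, add_zero] at h1
    omega
  set X : Finset (Fin N) → Submodule ℝ 𝕍 := fun S => C ⊔ ⨆ l ∈ S, D l with hX
  have hXle : ∀ S ⊆ K, ∀ m ∈ K, m ∉ S → X S ≤ E m := by
    intro S hSK m hm hmS
    refine sup_le (hCle m hm) (iSup₂_le fun l hl => ?_)
    have hlm : m ∈ K.erase l := Finset.mem_erase.2 ⟨fun h => hmS (h ▸ hl), hm⟩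
    exact le_trans (hDA l (hSK hl)) (hAle l m hlm)
  have hXrank : ∀ S, S ⊆ K → finrank ℝ ↥(X S) = finrank ℝ ↥C + ∑ l ∈ S, c l := by
    intro S
    induction S using Finset.induction_on with
    | empty =>
      intro _
      have hXe : X ∅ = C := by rw [hX]; simp
      rw [hXe]
      simp
    | @insert m S hmS ih =>
      intro hSK
      have hSK' : S ⊆ K := fun x hx => hSK (Finset.mem_insert_of_mem hx)
      have hmK : m ∈ K := hSK (Finset.mem_insert_self m S)
      have hXeq : X (insert m S) = X S ⊔ D m := by
        rw [hX]
        simp only [Finset.iSup_insert]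
        rw [sup_comm (D m) _, ← sup_assoc]
      have hdisj : X S ⊓ D m = ⊥ := by
        have h1 : X S ≤ E m := hXle S hSK' m hmK hmS
        have h2 : X S ⊓ D m ≤ C := by
          refine le_trans ?_ (hAEC m hmK)
          refine le_inf (le_trans inf_le_right (hDA m hmK)) (le_trans inf_le_left h1)
        have h3 : X S ⊓ D m ≤ D m ⊓ C := le_inf inf_le_right h2
        rw [← le_bot_iff, ← hDC m hmK]
        exact h3
      have h4 := Submodule.finrank_sup_add_finrank_inf_eq (X S) (D m)
      rw [hdisj] at h4
      simp only [finrank_bot, add_zero] at h4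
      rw [hXeq, h4, ih hSK', hDrank m hmK, Finset.sum_insert hmS]
      omega
  have hEX : ∀ i ∈ K, E i = X (K.erase i) := by
    intro i hi
    have hle : X (K.erase i) ≤ E i :=
      hXle (K.erase i) (Finset.erase_subset _ _) i hi (Finset.notMem_erase i K)
    have h3 : ∑ l ∈ K.erase i, c l + c i = ∑ l ∈ K, c l := Finset.sum_erase_add K c hi
    have h5 : finrank ℝ ↥(X (K.erase i)) = finrank ℝ ↥(E i) := by
      rw [hXrank _ (Finset.erase_subset _ _)]
      have h6 := hrank i hi
      have h7 : c i = finrank ℝ ↥U - finrank ℝ ↥(E i) := rfl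
      omega
    exact (Submodule.eq_of_le_of_finrank_eq hle h5).symm
  -- ambient complement
  obtain ⟨W, hW⟩ := Submodule.exists_isCompl (X K)
  -- build the adapted basis
  set dD : {j // j ∈ K} → ℕ := fun j => finrank ℝ ↥(D j.1) with hdD
  set ι : Type := Fin (finrank ℝ ↥C) ⊕ ((Σ j : {j // j ∈ K}, Fin (dD j)) ⊕ Fin (finrank ℝ ↥W))
    with hι
  set bC : Fin (finrank ℝ ↥C) → 𝕍 := fun k => ((Module.finBasis ℝ ↥C k : ↥C) : 𝕍) with hbC
  set bD : (Σ j : {j // j ∈ K}, Fin (dD j)) → 𝕍 :=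
    fun p => ((Module.finBasis ℝ ↥(D p.1.1) p.2 : ↥(D p.1.1)) : 𝕍) with hbD
  set bW : Fin (finrank ℝ ↥W) → 𝕍 := fun k => ((Module.finBasis ℝ ↥W k : ↥W) : 𝕍) with hbW
  set v : ι → 𝕍 := Sum.elim bC (Sum.elim bD bW) with hv
  have spanD : span ℝ (Set.range bD) = ⨆ l ∈ K, D l := by
    rw [hbD, Set.range_sigma_eq_iUnion_range, Submodule.span_iUnion]
    refine le_antisymm (iSup_le fun j => ?_) (iSup₂_le fun l hl => ?_)
    · rw [span_range_coe_finBasis (D j.1)]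
      exact le_iSup₂ (f := fun l _ => D l) j.1 j.2
    · rw [← span_range_coe_finBasis (D l)]
      exact le_iSup (fun j : {j // j ∈ K} =>
        span ℝ (Set.range fun k => ((Module.finBasis ℝ ↥(D j.1) k : ↥(D j.1)) : 𝕍))) ⟨l, hl⟩
  have spanTotal : span ℝ (Set.range v) = ⊤ := by
    rw [hv, Set.Sum.elim_range, Set.Sum.elim_range, Submodule.span_union, Submodule.span_union,
      span_range_coe_finBasis, spanD, span_range_coe_finBasis, ← sup_assoc]
    exact hW.sup_eq_top
  have hcard : Fintype.card ι = finrank ℝ 𝕍 := by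
    have h1 : finrank ℝ ↥(X K) + finrank ℝ ↥W = finrank ℝ 𝕍 :=
      Submodule.finrank_add_eq_of_isCompl hW
    have h2 : finrank ℝ ↥(X K) = finrank ℝ ↥C + ∑ l ∈ K, c l := hXrank K le_rfl
    have h3 : Fintype.card ι
        = finrank ℝ ↥C + ((∑ j : {j // j ∈ K}, dD j) + finrank ℝ ↥W) := by
      simp [hι, Fintype.card_sigma]
    have h4 : ∑ j : {j // j ∈ K}, dD j = ∑ j ∈ K, c j := by
      have hdD' : dD = fun j : {j // j ∈ K} => c j.1 := funext fun j => hDrank _ j.2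
      rw [hdD']
      exact Finset.sum_coe_sort K c
    omega
  set b : Basis ι ℝ 𝕍 := basisOfTopLeSpanOfCardEqFinrank v spanTotal.ge hcard with hb
  have hbv : ⇑b = v := coe_basisOfTopLeSpanOfCardEqFinrank v spanTotal.ge hcard
  -- index sets
  set T : Fin N → Set ι := fun i =>
    {x : ι | match x with
      | .inl _ => True
      | .inr (.inl p) => p.1.1 ≠ i
      | .inr (.inr _) => False} with hT
  have hET : ∀ i ∈ K, E i = span ℝ (b '' T i) := by
    intro i hi
    rw [hbv]
    refine le_antisymm ?_ ?_
    · rw [hEX i hi]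
      refine sup_le ?_ (iSup₂_le fun l hl => ?_)
      · rw [← span_range_coe_finBasis C]
        refine Submodule.span_mono ?_
        rintro x ⟨k, rfl⟩
        exact ⟨Sum.inl k, trivial, rfl⟩
      · rw [← span_range_coe_finBasis (D l)]
        refine Submodule.span_mono ?_
        rintro x ⟨k, rfl⟩
        refine ⟨Sum.inr (Sum.inl ⟨⟨l, Finset.mem_of_mem_erase hl⟩, k⟩), ?_, rfl⟩
        exact (Finset.mem_erase.1 hl).1
    · rw [Submodule.span_le]
      rintro x ⟨y, hy, rfl⟩
      match y with
      | .inl k => exact hCle i hi (Module.finBasis ℝ ↥C k).2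
      | .inr (.inl p) =>
        have hpi : p.1.1 ≠ i := hy
        have h1 : D p.1.1 ≤ E i := by
          refine le_trans (hDA p.1.1 p.1.2) (hAle p.1.1 i ?_)
          exact Finset.mem_erase.2 ⟨Ne.symm hpi, hi⟩
        exact h1 (Module.finBasis ℝ ↥(D p.1.1) p.2).2
      | .inr (.inr k) => exact absurd hy id
  -- the projections
  set TT : Finset (Fin N) → Set ι := fun S => {k | ∀ j ∈ S, k ∈ T j} with hTT
  refine ⟨fun S => b.constr ℝ (fun k => if k ∈ TT S then b k else 0), ?_, ?_, ?_⟩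
  · intro S hSK x j hj
    rw [Basis.constr_apply]
    rw [hET j (hSK hj)]
    refine Submodule.sum_mem _ fun k hk => ?_
    dsimp only
    by_cases hkT : k ∈ TT S
    · rw [if_pos hkT]
      exact Submodule.smul_mem _ _ (Submodule.subset_span ⟨k, hkT j hj, rfl⟩)
    · rw [if_neg hkT]
      simp
  · intro S hSK x hx
    have hsupp : ↑(b.repr x).support ⊆ TT S := by
      intro k hk j hj
      have := (Basis.mem_span_image b).1 (by rw [← hET j (hSK hj)]; exact hx j hj)
      exact this hk
    rw [Basis.constr_apply]
    have : ((b.repr x).sum fun k a => a • if k ∈ TT S then b k else 0)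
        = (b.repr x).sum fun k a => a • b k := by
      refine Finsupp.sum_congr fun k hk => ?_
      rw [if_pos (hsupp hk)]
    rw [this, ← Finsupp.linearCombination_apply, Basis.linearCombination_repr]
  · intro S hSK i hiK x hx
    have hsupp : ↑(b.repr x).support ⊆ T i := by
      have := (Basis.mem_span_image b).1 (by rw [← hET i hiK]; exact hx)
      exact this
    rw [Basis.constr_apply, Basis.constr_apply]
    refine Finsupp.sum_congr fun k hk => ?_
    have hkTi : k ∈ T i := hsupp hk
    by_cases hkT : k ∈ TT S
    · rw [if_pos hkT, if_pos ?_]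
      intro j hj
      rcases Finset.mem_insert.1 hj with rfl | hj'
      · exact hkTi
      · exact hkT j hj'
    · rw [if_neg hkT, if_neg ?_]
      intro hcon
      exact hkT fun j hj => hcon j (Finset.mem_insert_of_mem hj)


private noncomputable def nPt (P : 𝕍 →ₗ[ℝ] 𝕍) (ξ : 𝕍) : 𝕍 := ‖P ξ‖⁻¹ • P ξ

private noncomputable def rank1 (u : 𝕍) : 𝕍 →ₗ[ℝ] 𝕍 where
  toFun v := ⟪v, u⟫ • u
  map_add' x y := by rw [inner_add_left, add_smul]
  map_smul' c x := by rw [RingHom.id_apply, real_inner_smul_left, mul_smul]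

private noncomputable def Qmap (P : 𝕍 →ₗ[ℝ] 𝕍) (ξ : 𝕍) : 𝕍 →ₗ[ℝ] 𝕍 :=
  P - (rank1 (nPt P ξ)).comp P

private lemma Qmap_apply (P : 𝕍 →ₗ[ℝ] 𝕍) (ξ x : 𝕍) :
    Qmap P ξ x = P x - ⟪P x, nPt P ξ⟫ • nPt P ξ := rfl

private noncomputable def locTerm (g : 𝕍 → Amb) (P : 𝕍 →ₗ[ℝ] 𝕍) (ξ : 𝕍) :
    Amb :=
  ((restrictForm t P).compAlternatingMap (g (nPt P ξ))).compLinearMap (Qmap P ξ)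

private lemma locTerm_apply (g : 𝕍 → Amb) (P : 𝕍 →ₗ[ℝ] 𝕍) (ξ : 𝕍)
    (v : Fin s → 𝕍) (w : Fin t → 𝕍) :
    locTerm g P ξ v w
      = g (nPt P ξ) (fun a => Qmap P ξ (v a)) (fun b => P (w b)) := rfl

private noncomputable def gSel (g : Fin N → 𝕍 → Amb) (S : Finset (Fin N)) : 𝕍 → Amb :=
  if h : S = ∅ then 0 else g (S.min' (Finset.nonempty_of_ne_empty h))

private noncomputable def locForm (g : Fin N → 𝕍 → Amb)
    (P : Finset (Fin N) → (𝕍 →ₗ[ℝ] 𝕍)) (K : Finset (Fin N)) (ξ : 𝕍) : Amb :=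
  ∑ S ∈ K.powerset.filter (fun S => S ≠ ∅),
    ((-1 : ℝ) ^ (S.card + 1)) • locTerm (gSel g S) (P S) ξ

private lemma locForm_res (E : Fin N → Submodule ℝ 𝕍) (g : Fin N → 𝕍 → Amb)
    (hcompat : ∀ i j, ∀ ξ ∈ E i ⊓ E j, ‖ξ‖ = 1 →
      resSection s t (sphereTangent (E i ⊓ E j) ξ) (E i ⊓ E j) (g i ξ) =
        resSection s t (sphereTangent (E i ⊓ E j) ξ) (E i ⊓ E j) (g j ξ))
    (K : Finset (Fin N)) (P : Finset (Fin N) → (𝕍 →ₗ[ℝ] 𝕍))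
    (hP1 : ∀ S, S ⊆ K → ∀ x, ∀ j ∈ S, P S x ∈ E j)
    (hP2 : ∀ S, S ⊆ K → ∀ x, (∀ j ∈ S, x ∈ E j) → P S x = x)
    (hP3 : ∀ S, S ⊆ K → ∀ i ∈ K, ∀ x ∈ E i, P S x = P (insert i S) x)
    (i : Fin N) (hiK : i ∈ K) (ξ : 𝕍) (hξE : ξ ∈ E i) (hξ : ‖ξ‖ = 1)
    (hPne : ∀ S, S ⊆ K → S ≠ ∅ → P S ξ ≠ 0) :
    resSection s t (sphereTangent (E i) ξ) (E i) (locForm g P K ξ)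
      = resSection s t (sphereTangent (E i) ξ) (E i) (g i ξ) := by
  classical
  refine resSection_congr fun v w hv hw => ?_
  have hvE : ∀ a, v a ∈ E i := fun a => (sphereTangent_mem (hv a)).1
  have hvO : ∀ a, ⟪ξ, v a⟫ = 0 := fun a => (sphereTangent_mem (hv a)).2
  -- expand the sum
  rw [locForm, alt_sum_apply₂]
  have hsum : ∀ S ∈ K.powerset.filter (fun S => S ≠ ∅),
      (((-1 : ℝ) ^ (S.card + 1)) • locTerm (gSel g S) (P S) ξ) v w
        = ((-1 : ℝ) ^ (S.card + 1)) * (locTerm (gSel g S) (P S) ξ v w) := by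
    intro S _
    simp
  rw [Finset.sum_congr rfl hsum, Finset.sum_filter]
  -- re-index over the powerset of `K.erase i`
  have hK' : K = insert i (K.erase i) := (Finset.insert_erase hiK).symm
  rw [hK', Finset.sum_powerset_insert (Finset.notMem_erase i K), ← Finset.sum_add_distrib]
  have hmain : ∀ S ∈ (K.erase i).powerset,
      ((if S ≠ ∅ then ((-1 : ℝ) ^ (S.card + 1)) * (locTerm (gSel g S) (P S) ξ v w) else 0)
        + (if insert i S ≠ ∅ then ((-1 : ℝ) ^ ((insert i S).card + 1))
            * (locTerm (gSel g (insert i S)) (P (insert i S)) ξ v w) else 0))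
        = if S = ∅ then g i ξ v w else 0 := by
    intro S hS
    have hSsub : S ⊆ K.erase i := Finset.mem_powerset.1 hS
    have hiS : i ∉ S := fun hmem => Finset.notMem_erase i K (hSsub hmem)
    have hSK : S ⊆ K := hSsub.trans (Finset.erase_subset _ _)
    have hS'K : insert i S ⊆ K := Finset.insert_subset hiK hSK
    have hS'ne : insert i S ≠ ∅ := Finset.insert_ne_empty _ _
    by_cases hSe : S = ∅
    · subst hSe
      rw [if_pos rfl, if_neg (by simp : ¬(∅ : Finset (Fin N)) ≠ ∅), if_pos hS'ne, zero_add]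
      have hins : insert i (∅ : Finset (Fin N)) = {i} := rfl
      rw [hins]
      have h1 : ((-1 : ℝ) ^ (({i} : Finset (Fin N)).card + 1))
          * (locTerm (gSel g {i}) (P {i}) ξ v w) = g i ξ v w := by
        simp only [Finset.card_singleton]
        have hgS : gSel g {i} = g i := by
          rw [gSel, dif_neg (Finset.singleton_ne_empty i), Finset.min'_singleton]
        have hPξ : P {i} ξ = ξ := hP2 {i} (Finset.singleton_subset_iff.2 hiK) ξ
          (fun j hj => by rwa [Finset.mem_singleton.1 hj])
        have hn : nPt (P {i}) ξ = ξ := by rw [nPt, hPξ, hξ, inv_one, one_smul]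
        have hQ : ∀ a, Qmap (P {i}) ξ (v a) = v a := by
          intro a
          rw [Qmap_apply, hn,
            hP2 {i} (Finset.singleton_subset_iff.2 hiK) (v a)
              (fun j hj => by rw [Finset.mem_singleton.1 hj]; exact hvE a)]
          rw [real_inner_comm, hvO a, zero_smul, sub_zero]
        have hPw : ∀ b, P {i} (w b) = w b := fun b =>
          hP2 {i} (Finset.singleton_subset_iff.2 hiK) (w b)
            (fun j hj => by rw [Finset.mem_singleton.1 hj]; exact hw b)
        rw [locTerm_apply, hgS, hn]
        have : (fun a => Qmap (P {i}) ξ (v a)) = v := funext hQ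
        rw [this]
        have : (fun b => P {i} (w b)) = w := funext hPw
        rw [this]
        ring
      exact h1
    · rw [if_neg hSe, if_pos hSe, if_pos hS'ne]
      have hSne : S.Nonempty := Finset.nonempty_of_ne_empty hSe
      -- the two terms agree up to opposite signs
      have e2 : ∀ x ∈ E i, P S x = P (insert i S) x := hP3 S hSK i hiK
      have e1 : P S ξ = P (insert i S) ξ := e2 ξ hξE
      have hPSne : P S ξ ≠ 0 := hPne S hSK hSe
      set ν : 𝕍 := nPt (P S) ξ with hν
      have hνeq : nPt (P (insert i S)) ξ = ν := by rw [nPt, ← e1, hν, nPt]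
      have hνnorm : ‖ν‖ = 1 := by
        rw [hν, nPt]
        exact norm_smul_inv_norm hPSne
      have hνself : ⟪ν, ν⟫ = 1 := by
        have := real_inner_self_eq_norm_mul_norm ν
        rw [hνnorm] at this
        simpa using this
      have hνmem : ∀ j ∈ insert i S, ν ∈ E j := by
        intro j hj
        rw [hν, nPt, e1]
        exact Submodule.smul_mem _ _ (hP1 (insert i S) hS'K ξ j hj)
      have hQmem : ∀ j ∈ insert i S, ∀ a, Qmap (P S) ξ (v a) ∈ E j := by
        intro j hj a
        rw [Qmap_apply, e2 (v a) (hvE a)]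
        exact Submodule.sub_mem _ (hP1 (insert i S) hS'K (v a) j hj)
          (Submodule.smul_mem _ _ (hνmem j hj))
      have hQorth : ∀ a, ⟪ν, Qmap (P S) ξ (v a)⟫ = 0 := by
        intro a
        rw [Qmap_apply, inner_sub_right, real_inner_smul_right, hνself, mul_one,
          real_inner_comm ν (P S (v a)), sub_self]
      have hPwmem : ∀ j ∈ insert i S, ∀ b, P S (w b) ∈ E j := by
        intro j hj b
        rw [e2 (w b) (hw b)]
        exact hP1 (insert i S) hS'K (w b) j hj
      -- all `g p` for `p ∈ insert i S` agree at `ν` on the restthat arguments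
      have hagree : ∀ p ∈ insert i S, ∀ q ∈ insert i S,
          g p ν (fun a => Qmap (P S) ξ (v a)) (fun b => P S (w b))
            = g q ν (fun a => Qmap (P S) ξ (v a)) (fun b => P S (w b)) := by
        intro p hp q hq
        have hνpq : ν ∈ E p ⊓ E q := Submodule.mem_inf.2 ⟨hνmem p hp, hνmem q hq⟩
        refine resSection_eq_apply (hcompat p q ν hνpq hνnorm) _ _ ?_ ?_
        · intro a
          exact mem_sphereTangent
            (Submodule.mem_inf.2 ⟨hQmem p hp a, hQmem q hq a⟩) (hQorth a)
        · intro b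
          exact Submodule.mem_inf.2 ⟨hPwmem p hp b, hPwmem q hq b⟩
      -- compute both local terms
      have hterm : locTerm (gSel g S) (P S) ξ v w
          = locTerm (gSel g (insert i S)) (P (insert i S)) ξ v w := by
        rw [locTerm_apply, locTerm_apply, hνeq]
        have hargv : (fun a => Qmap (P (insert i S)) ξ (v a))
            = fun a => Qmap (P S) ξ (v a) := by
          funext a
          rw [Qmap_apply, Qmap_apply, hνeq, ← e2 (v a) (hvE a)]
        have hargw : (fun b => P (insert i S) (w b)) = fun b => P S (w b) := by
          funext b
          rw [← e2 (w b) (hw b)]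
        rw [hargv, hargw]
        have hgS : gSel g S = g (S.min' hSne) := by rw [gSel, dif_neg hSe]
        have hgS' : gSel g (insert i S) = g ((insert i S).min' ⟨i, Finset.mem_insert_self i S⟩) := by
          rw [gSel, dif_neg hS'ne]
        rw [hgS, hgS']
        exact hagree _ (Finset.mem_insert_of_mem (S.min'_mem hSne)) _
          ((insert i S).min'_mem ⟨i, Finset.mem_insert_self i S⟩)
      have hcard : (insert i S).card = S.card + 1 := Finset.card_insert_of_notMem hiS
      rw [hcard, ← hterm, pow_succ]
      ring
  rw [Finset.sum_congr rfl hmain,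
    Finset.sum_ite_eq' ((K.erase i).powerset) (∅ : Finset (Fin N)) (fun _ => g i ξ v w),
    if_pos (Finset.empty_mem_powerset _)]


private lemma locForm_contDiffAt (g : Fin N → 𝕍 → Amb)
    (hg : ∀ i, ContDiff ℝ (⊤ : ℕ∞)
      (fun x : 𝕏 => g i x.1 x.2.1 x.2.2))
    (P : Finset (Fin N) → (𝕍 →ₗ[ℝ] 𝕍)) (K : Finset (Fin N))
    (x₀ : 𝕏)
    (hx₀ : ∀ S, S ⊆ K → S ≠ ∅ → P S x₀.1 ≠ 0) :
    ContDiffAt ℝ (⊤ : ℕ∞)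
      (fun x : 𝕏 => locForm g P K x.1 x.2.1 x.2.2) x₀ := by
  classical
  have heq : (fun x : 𝕏 => locForm g P K x.1 x.2.1 x.2.2)
      = fun x : 𝕏 => ∑ S ∈ K.powerset.filter (fun S => S ≠ ∅),
          ((-1 : ℝ) ^ (S.card + 1)) *
            (gSel g S (nPt (P S) x.1) (fun a => Qmap (P S) x.1 (x.2.1 a))
              (fun b => P S (x.2.2 b))) := by
    funext x
    rw [locForm, alt_sum_apply₂]
    refine Finset.sum_congr rfl fun S _ => ?_
    rw [AlternatingMap.smul_apply, AlternatingMap.smul_apply, locTerm_apply]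
    simp
  rw [heq]
  refine ContDiffAt.sum fun S hS => ?_
  have hSK : S ⊆ K := Finset.mem_powerset.1 (Finset.mem_filter.1 hS).1
  have hSne : S ≠ ∅ := (Finset.mem_filter.1 hS).2
  have hPne : P S x₀.1 ≠ 0 := hx₀ S hSK hSne
  refine ContDiffAt.mul contDiffAt_const ?_
  -- basic smooth pieces
  have hPc : ContDiff ℝ (⊤ : ℕ∞) fun y : 𝕍 => P S y := by
    have h := (LinearMap.toContinuousLinearMap (P S)).contDiff (n := (⊤ : ℕ∞))
    simpa using h
  have hPx : ContDiff ℝ (⊤ : ℕ∞) (fun x : 𝕏 => P S x.1) := hPc.comp contDiff_fst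
  have hnormne : ‖P S x₀.1‖ ≠ 0 := norm_ne_zero_iff.2 hPne
  have hninv : ContDiffAt ℝ (⊤ : ℕ∞) (fun x : 𝕏 => ‖P S x.1‖⁻¹) x₀ :=
    (hPx.contDiffAt.norm ℝ hPne).inv hnormne
  have hn : ContDiffAt ℝ (⊤ : ℕ∞) (fun x : 𝕏 => nPt (P S) x.1) x₀ := by
    have h2 : (fun x : 𝕏 => nPt (P S) x.1) = fun x : 𝕏 => ‖P S x.1‖⁻¹ • P S x.1 := rfl
    rw [h2]
    exact hninv.smul hPx.contDiffAt
  have hva : ∀ a, ContDiffAt ℝ (⊤ : ℕ∞) (fun x : 𝕏 => P S (x.2.1 a)) x₀ := fun a =>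
    (hPc.comp ((contDiff_pi.1 (contDiff_fst.comp contDiff_snd)) a)).contDiffAt
  have hwb : ∀ b, ContDiffAt ℝ (⊤ : ℕ∞) (fun x : 𝕏 => P S (x.2.2 b)) x₀ := fun b =>
    (hPc.comp ((contDiff_pi.1 (contDiff_snd.comp contDiff_snd)) b)).contDiffAt
  have hQ : ContDiffAt ℝ (⊤ : ℕ∞) (fun x : 𝕏 => (fun a => Qmap (P S) x.1 (x.2.1 a))) x₀ := by
    refine contDiffAt_pi.2 fun a => ?_
    have h2 : (fun x : 𝕏 => Qmap (P S) x.1 (x.2.1 a))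
        = fun x : 𝕏 => P S (x.2.1 a) - ⟪P S (x.2.1 a), nPt (P S) x.1⟫ • nPt (P S) x.1 := by
      funext x; rw [Qmap_apply]
    rw [h2]
    exact (hva a).sub ((((hva a).inner ℝ hn)).smul hn)
  have hW : ContDiffAt ℝ (⊤ : ℕ∞) (fun x : 𝕏 => (fun b => P S (x.2.2 b))) x₀ :=
    contDiffAt_pi.2 fun b => hwb b
  have hgS : ContDiff ℝ (⊤ : ℕ∞) (fun y : 𝕏 => gSel g S y.1 y.2.1 y.2.2) := by
    rw [gSel, dif_neg hSne]
    exact hg _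
  exact (hgS.contDiffAt.comp x₀ (hn.prodMk (hQ.prodMk hW)))


end Auxiliary

/-- let `{E i}` be a semi-generic arrangement of subspaces of `ℝ^n` and let
`g i` be smooth sections over `S(E i)` of the bundles with fibers
`⋀^s (T_ξ S(E i))^* ⊗ ⋀^t (E i)^*` (each encoded by an ambient smooth form–valued map, whose
restriction at every `ξ ∈ S(E i)` is the value of the section), pairwise compatible on the
intersections.  Then there is a smooth section `f` over `S^{n-1}` of the bundle with fiber
`⋀^s (T_ξ S^{n-1})^* ⊗ ⋀^t (ℝ^n)^*` restricting to `g i` over each `S(E i)`. -/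
theorem exists_smooth_section_extension
    {n N : ℕ} (s t : ℕ) (E : Fin N → Submodule ℝ (EuclideanSpace ℝ (Fin n)))
    (hE : IsSemiGeneric E)
    (g : Fin N → EuclideanSpace ℝ (Fin n) →
      AlternatingMap ℝ (EuclideanSpace ℝ (Fin n))
        (AlternatingMap ℝ (EuclideanSpace ℝ (Fin n)) ℝ (Fin t)) (Fin s))
    (hg : ∀ i, ContDiff ℝ (⊤ : ℕ∞)
      (fun x : EuclideanSpace ℝ (Fin n) × (Fin s → EuclideanSpace ℝ (Fin n)) ×
          (Fin t → EuclideanSpace ℝ (Fin n)) => g i x.1 x.2.1 x.2.2))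
    (hcompat : ∀ i j, ∀ ξ ∈ E i ⊓ E j, ‖ξ‖ = 1 →
      resSection s t (sphereTangent (E i ⊓ E j) ξ) (E i ⊓ E j) (g i ξ) =
        resSection s t (sphereTangent (E i ⊓ E j) ξ) (E i ⊓ E j) (g j ξ)) :
    ∃ f : EuclideanSpace ℝ (Fin n) →
        AlternatingMap ℝ (EuclideanSpace ℝ (Fin n))
          (AlternatingMap ℝ (EuclideanSpace ℝ (Fin n)) ℝ (Fin t)) (Fin s),
      ContDiff ℝ (⊤ : ℕ∞)
        (fun x : EuclideanSpace ℝ (Fin n) × (Fin s → EuclideanSpace ℝ (Fin n)) ×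
            (Fin t → EuclideanSpace ℝ (Fin n)) => f x.1 x.2.1 x.2.2) ∧
      ∀ i, ∀ ξ ∈ E i, ‖ξ‖ = 1 →
        resSection s t (sphereTangent (E i) ξ) (E i) (f ξ) =
          resSection s t (sphereTangent (E i) ξ) (E i) (g i ξ) := by
  classical
  set 𝕍 := EuclideanSpace ℝ (Fin n)
  -- the union of the spheres
  set X : Set 𝕍 := {ξ | ‖ξ‖ = 1 ∧ ∃ i, ξ ∈ E i} with hX
  have hXeq : X = ⋃ i : Fin N, ({ξ : 𝕍 | ‖ξ‖ = 1} ∩ (E i : Set 𝕍)) := by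
    ext ξ
    simp only [hX, Set.mem_setOf_eq, Set.mem_iUnion, Set.mem_inter_iff, SetLike.mem_coe]
    tauto
  have hsphcl : IsClosed {ξ : 𝕍 | ‖ξ‖ = 1} := isClosed_eq continuous_norm continuous_const
  have hXclosed : IsClosed X := by
    rw [hXeq]
    exact isClosed_iUnion_of_finite fun i =>
      hsphcl.inter (Submodule.closed_of_finiteDimensional (E i))
  have hXcomp : IsCompact X := by
    refine (isCompact_closedBall (0 : 𝕍) 1).of_isClosed_subset hXclosed ?_
    intro ξ hξ
    rw [Metric.mem_closedBall, dist_zero_right, hξ.1]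
  -- the active index set at a point
  set Kf : 𝕍 → Finset (Fin N) := fun ξ₀ => Finset.univ.filter (fun i => ξ₀ ∈ E i) with hKf
  have hKf_mem : ∀ ξ₀ i, i ∈ Kf ξ₀ ↔ ξ₀ ∈ E i := by
    intro ξ₀ i
    simp [hKf]
  -- local projection data at every point of X
  have hloc : ∀ p : X, ∃ P : Finset (Fin N) → (𝕍 →ₗ[ℝ] 𝕍),
      (∀ S, S ⊆ Kf p.1 → ∀ x, ∀ j ∈ S, P S x ∈ E j) ∧
      (∀ S, S ⊆ Kf p.1 → ∀ x, (∀ j ∈ S, x ∈ E j) → P S x = x) ∧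
      (∀ S, S ⊆ Kf p.1 → ∀ i ∈ Kf p.1, ∀ x ∈ E i, P S x = P (insert i S) x) := by
    rintro ⟨ξ₀, hξnorm, i₀, hi₀⟩
    have hne : (Kf ξ₀).Nonempty := ⟨i₀, (hKf_mem ξ₀ i₀).2 hi₀⟩
    have hξ0 : ξ₀ ≠ 0 := by
      intro h0
      rw [h0, norm_zero] at hξnorm
      exact one_ne_zero hξnorm.symm
    have hbot : (⨅ i ∈ Kf ξ₀, E i) ≠ ⊥ := by
      intro hb
      have : ξ₀ ∈ (⨅ i ∈ Kf ξ₀, E i) := by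
        refine (Submodule.mem_iInf _).2 fun j => (Submodule.mem_iInf _).2 fun hj => ?_
        exact (hKf_mem ξ₀ j).1 hj
      rw [hb, Submodule.mem_bot] at this
      exact hξ0 this
    exact exists_good_projections E (Kf ξ₀) hne (hE (Kf ξ₀) hne hbot)
  choose Ploc hP1 hP2 hP3 using hloc
  -- neighbourhoods
  set Uset : X → Set 𝕍 := fun p =>
    (⋂ S ∈ (Kf p.1).powerset.filter (fun S => S ≠ ∅), {ξ : 𝕍 | Ploc p S ξ ≠ 0}) ∩
      (⋂ j ∈ (Finset.univ \ Kf p.1), ({ξ : 𝕍 | ‖ξ‖ = 1} ∩ (E j : Set 𝕍))ᶜ) with hUset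
  have hUopen : ∀ p : X, IsOpen (Uset p) := by
    intro p
    refine IsOpen.inter (isOpen_biInter_finset fun S _ => ?_)
      (isOpen_biInter_finset fun j _ => ?_)
    · have hcont : Continuous fun ξ : 𝕍 => Ploc p S ξ :=
        (Ploc p S).continuous_of_finiteDimensional
      exact isOpen_compl_singleton.preimage hcont
    · exact ((hsphcl.inter (Submodule.closed_of_finiteDimensional (E j)))).isOpen_compl
  have hUmem : ∀ p : X, p.1 ∈ Uset p := by
    rintro ⟨ξ₀, hξnorm, i₀, hi₀⟩
    constructor
    · refine Set.mem_iInter₂.2 fun S hS => ?_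
      have hSK : S ⊆ Kf ξ₀ := Finset.mem_powerset.1 (Finset.mem_filter.1 hS).1
      have : Ploc ⟨ξ₀, hξnorm, i₀, hi₀⟩ S ξ₀ = ξ₀ :=
        hP2 _ S hSK ξ₀ fun j hj => (hKf_mem ξ₀ j).1 (hSK hj)
      rw [Set.mem_setOf_eq, this]
      intro h0
      rw [h0, norm_zero] at hξnorm
      exact one_ne_zero hξnorm.symm
    · refine Set.mem_iInter₂.2 fun j hj => ?_
      have hjK : j ∉ Kf ξ₀ := (Finset.mem_sdiff.1 hj).2
      intro hmem
      exact hjK ((hKf_mem ξ₀ j).2 hmem.2)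
  -- finite subcover
  have hXcover : X ⊆ ⋃ p : X, Uset p := fun ξ hξ =>
    Set.mem_iUnion.2 ⟨⟨ξ, hξ⟩, hUmem ⟨ξ, hξ⟩⟩
  obtain ⟨κ, hκ⟩ := hXcomp.elim_finite_subcover (fun p : X => Uset p) hUopen hXcover
  -- smooth partition of unity
  set Ufun : Option {p : X // p ∈ κ} → Set 𝕍 := fun o =>
    Option.elim o Xᶜ (fun k => Uset k.1) with hUfun
  have hUfun_open : ∀ o, IsOpen (Ufun o) := by
    rintro (_ | k)
    · exact hXclosed.isOpen_compl
    · exact hUopen k.1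
  have hUfun_cover : X ⊆ ⋃ o, Ufun o := by
    intro ξ hξ
    obtain ⟨p, hpmem⟩ := Set.mem_iUnion.1 (hκ hξ)
    obtain ⟨hpκ, hξp⟩ := Set.mem_iUnion.1 hpmem
    exact Set.mem_iUnion.2 ⟨some ⟨p, hpκ⟩, hξp⟩
  obtain ⟨ρ, hρ⟩ := SmoothPartitionOfUnity.exists_isSubordinate
    (I := 𝓘(ℝ, EuclideanSpace ℝ (Fin n))) hXclosed Ufun hUfun_open hUfun_cover
  -- the global section
  refine ⟨fun ξ => ∑ k : {p : X // p ∈ κ}, ρ (some k) ξ • locForm g (Ploc k.1) (Kf k.1.1) ξ,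
    ?_, ?_⟩
  · -- smoothness
    have hfeq : (fun x : 𝕍 × (Fin s → 𝕍) × (Fin t → 𝕍) =>
        (∑ k : {p : X // p ∈ κ}, ρ (some k) x.1 • locForm g (Ploc k.1) (Kf k.1.1) x.1)
          x.2.1 x.2.2)
        = fun x : 𝕍 × (Fin s → 𝕍) × (Fin t → 𝕍) =>
            ∑ k : {p : X // p ∈ κ},
              ρ (some k) x.1 * (locForm g (Ploc k.1) (Kf k.1.1) x.1 x.2.1 x.2.2) := by
      funext x
      rw [alt_sum_apply₂]
      refine Finset.sum_congr rfl fun k _ => ?_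
      rw [AlternatingMap.smul_apply, AlternatingMap.smul_apply]
      simp
    rw [hfeq, contDiff_iff_contDiffAt]
    intro x
    refine ContDiffAt.sum fun k _ => ?_
    by_cases hx1 : x.1 ∈ Uset k.1
    · have hρk : ContDiff ℝ (⊤ : ℕ∞) (fun ξ : 𝕍 => ρ (some k) ξ) :=
        contMDiff_iff_contDiff.1 (ρ (some k)).contMDiff
      refine ContDiffAt.mul ((hρk.comp contDiff_fst).contDiffAt) ?_
      refine locForm_contDiffAt g hg (Ploc k.1) (Kf k.1.1) x ?_
      intro S hSK hSne
      exact Set.mem_iInter₂.1 hx1.1 S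
        (Finset.mem_filter.2 ⟨Finset.mem_powerset.2 hSK, hSne⟩)
    · have hnot : x.1 ∉ tsupport (ρ (some k)) := fun hmem => hx1 (hρ (some k) hmem)
      have hopen : IsOpen (tsupport (ρ (some k)))ᶜ := (isClosed_tsupport _).isOpen_compl
      have hev : (fun y : 𝕍 × (Fin s → 𝕍) × (Fin t → 𝕍) =>
          ρ (some k) y.1 * (locForm g (Ploc k.1) (Kf k.1.1) y.1 y.2.1 y.2.2))
          =ᶠ[nhds x] (fun _ => 0) := by
        have hnhds : (tsupport (ρ (some k)))ᶜ ∈ nhds x.1 := hopen.mem_nhds hnot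
        have hpre : (Prod.fst ⁻¹' (tsupport (ρ (some k)))ᶜ :
            Set (𝕍 × (Fin s → 𝕍) × (Fin t → 𝕍))) ∈ nhds x :=
          continuous_fst.continuousAt.preimage_mem_nhds hnhds
        filter_upwards [hpre] with y hy
        rw [image_eq_zero_of_notMem_tsupport hy, zero_mul]
      exact (contDiffAt_const (c := (0:ℝ))).congr_of_eventuallyEq hev
  · -- restriction property
    intro i ξ hξE hξn
    have hξX : ξ ∈ X := ⟨hξn, i, hξE⟩
    refine resSection_congr fun v w hv hw => ?_
    rw [alt_sum_apply₂]
    have hterm : ∀ k ∈ (Finset.univ : Finset {p : X // p ∈ κ}),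
        (ρ (some k) ξ • locForm g (Ploc k.1) (Kf k.1.1) ξ) v w
          = ρ (some k) ξ * (g i ξ v w) := by
      intro k _
      rw [AlternatingMap.smul_apply, AlternatingMap.smul_apply, smul_eq_mul]
      by_cases hρ0 : ρ (some k) ξ = 0
      · rw [hρ0, zero_mul, zero_mul]
      · have hmem : ξ ∈ Uset k.1 := hρ (some k)
          (subset_tsupport _ (by simpa [Function.mem_support] using hρ0))
        have hiK : i ∈ Kf k.1.1 := by
          by_contra hiK
          exact (Set.mem_iInter₂.1 hmem.2 i
            (Finset.mem_sdiff.2 ⟨Finset.mem_univ i, hiK⟩)) ⟨hξn, hξE⟩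
        have hPne : ∀ S, S ⊆ Kf k.1.1 → S ≠ ∅ → Ploc k.1 S ξ ≠ 0 := by
          intro S hSK hSne
          exact Set.mem_iInter₂.1 hmem.1 S
            (Finset.mem_filter.2 ⟨Finset.mem_powerset.2 hSK, hSne⟩)
        have hres := locForm_res E g hcompat (Kf k.1.1) (Ploc k.1)
          (hP1 k.1) (hP2 k.1) (hP3 k.1) i hiK ξ hξE hξn hPne
        rw [resSection_eq_apply hres v w hv hw]
    rw [Finset.sum_congr rfl hterm, ← Finset.sum_mul]
    have hsum1 : ∑ k : {p : X // p ∈ κ}, ρ (some k) ξ = 1 := by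
      have h1 := ρ.sum_eq_one hξX
      rw [finsum_eq_sum_of_fintype, Fintype.sum_option] at h1
      have h0 : ρ none ξ = 0 :=
        image_eq_zero_of_notMem_tsupport fun hmem => (hρ none hmem) hξX
      rw [h0, zero_add] at h1
      exact h1
    rw [hsum1, one_mul]
end
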